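/- arXiv:1004.5507 — 9 statements merged into one kernel-verified Lean document; each statement's English description precedes it below -/
import Mathlib

section
/- Let u be a measurable function on a metric measure space X, s ∈ (0,∞), ε ∈ (0,s], and N ∈ ℤ. If g⃗ = {g_k}_{k∈ℤ} ∈ 𝔻̃^{s,ε,N}(u), then the sequence h⃗ = {h_k}_{k∈ℤ} with h_k := ∑_{j=k−N}^{∞} 2^{(k−j+1)ε} g_j belongs to 𝔻^s(u). -/
/-!
On a dyadic annulus `2^{-k-1} ≤ d(x,y) < 2^{-k}` the cutoff `d(x,y) ≥ 2^{-j-1-N}` keeps exactly the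
indices `j ≥ k - N`, and `d(x,y)^{-ε} ≤ 2^{(k+1)ε}` turns each weight `d(x,y)^{s-ε} 2^{-jε}` into
`d(x,y)^s 2^{(k-j+1)ε}`; so the `𝔻̃` inequality bounds `|u(x) - u(y)|` termwise by `d(x,y)^s (h_k(x) + h_k(y))`.
-/

open MeasureTheory ENNReal

/-- `g` is a fractional `s`-Hajłasz gradient of `u` (Definition 1.1), `𝔻^s(u)`. -/
def IsFracHajlaszGradient {X : Type*} [MetricSpace X] [MeasurableSpace X]
    (μ : Measure X) (s : ℝ) (u : X → ℝ) (g : ℤ → X → ℝ≥0∞) : Prop :=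
  (∀ k, Measurable (g k)) ∧
  ∃ E : Set X, μ E = 0 ∧ ∀ (k : ℤ), ∀ x ∉ E, ∀ y ∉ E,
    (2 : ℝ) ^ (-k - 1) ≤ dist x y → dist x y < (2 : ℝ) ^ (-k) →
    ENNReal.ofReal |u x - u y| ≤ ENNReal.ofReal (dist x y ^ s) * (g k x + g k y)

/-- The class `𝔻̃^{s,ε,N}(u)`. -/
def MemTildeD {X : Type*} [MetricSpace X] [MeasurableSpace X]
    (μ : Measure X) (s ε : ℝ) (N : ℤ) (u : X → ℝ) (g : ℤ → X → ℝ≥0∞) : Prop :=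
  (∀ k, Measurable (g k)) ∧
  ∃ E : Set X, μ E = 0 ∧ ∀ x ∉ E, ∀ y ∉ E,
    ENNReal.ofReal |u x - u y| ≤ ENNReal.ofReal (dist x y ^ (s - ε)) *
      ∑' k : ℤ, ENNReal.ofReal ((2 : ℝ) ^ (-(k : ℝ) * ε)) * (g k x + g k y) *
        (if (2 : ℝ) ^ (-k - 1 - N) ≤ dist x y then 1 else 0)

lemma two_zpow_neg_sub_one_le_iff {d : ℝ} {k : ℤ} (h₁ : (2 : ℝ) ^ (-k - 1) ≤ d)
    (h₂ : d < (2 : ℝ) ^ (-k)) (m : ℤ) : (2 : ℝ) ^ (-m - 1) ≤ d ↔ k ≤ m := by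
  constructor
  · intro hm
    by_contra! hmk
    have : (2 : ℝ) ^ (-k) ≤ (2 : ℝ) ^ (-m - 1) := zpow_le_zpow_right₀ (by norm_num) (by omega)
    linarith
  · intro hkm
    exact (zpow_le_zpow_right₀ (by norm_num) (by omega)).trans h₁

lemma rpow_neg_le_two_rpow {d ε : ℝ} {k : ℤ} (hd : (2 : ℝ) ^ (-k - 1) ≤ d) (hε : 0 ≤ ε) :
    d ^ (-ε) ≤ (2 : ℝ) ^ (((k : ℝ) + 1) * ε) := by
  have hd₀ : 0 < d := lt_of_lt_of_le (by positivity) hd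
  rw [Real.rpow_neg hd₀.le, show ((k : ℝ) + 1) * ε = -((-(k : ℝ) - 1) * ε) by ring,
    Real.rpow_neg (by norm_num)]
  refine inv_anti₀ (by positivity) ?_
  calc (2 : ℝ) ^ ((-(k : ℝ) - 1) * ε) = ((2 : ℝ) ^ (-k - 1)) ^ ε := by
        rw [Real.rpow_mul (by norm_num), ← Real.rpow_intCast]
        push_cast
        ring_nf
    _ ≤ d ^ ε := Real.rpow_le_rpow (by positivity) hd hε

lemma rpow_sub_mul_two_rpow_le {d s ε : ℝ} {j k : ℤ} (hd : (2 : ℝ) ^ (-k - 1) ≤ d) (hε : 0 ≤ ε) :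
    d ^ (s - ε) * (2 : ℝ) ^ (-(j : ℝ) * ε) ≤ d ^ s * (2 : ℝ) ^ (((k - j + 1 : ℤ) : ℝ) * ε) := by
  have hd₀ : 0 < d := lt_of_lt_of_le (by positivity) hd
  calc d ^ (s - ε) * (2 : ℝ) ^ (-(j : ℝ) * ε)
      = d ^ s * (d ^ (-ε) * (2 : ℝ) ^ (-(j : ℝ) * ε)) := by
        rw [sub_eq_add_neg, Real.rpow_add hd₀]; ring
    _ ≤ d ^ s * ((2 : ℝ) ^ (((k : ℝ) + 1) * ε) * (2 : ℝ) ^ (-(j : ℝ) * ε)) := by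
        gcongr; exact rpow_neg_le_two_rpow hd hε
    _ = d ^ s * (2 : ℝ) ^ (((k - j + 1 : ℤ) : ℝ) * ε) := by
        rw [← Real.rpow_add (by norm_num)]; push_cast; ring_nf

lemma tildeD_term_le {d s ε : ℝ} {j k N : ℤ} (h₁ : (2 : ℝ) ^ (-k - 1) ≤ d)
    (h₂ : d < (2 : ℝ) ^ (-k)) (hε : 0 ≤ ε) (a b : ℝ≥0∞) :
    ENNReal.ofReal (d ^ (s - ε)) * (ENNReal.ofReal ((2 : ℝ) ^ (-(j : ℝ) * ε)) * (a + b) *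
        (if (2 : ℝ) ^ (-j - 1 - N) ≤ d then 1 else 0)) ≤
      ENNReal.ofReal (d ^ s) *
        ((if k - N ≤ j then ENNReal.ofReal ((2 : ℝ) ^ (((k - j + 1 : ℤ) : ℝ) * ε)) * a else 0) +
          (if k - N ≤ j then ENNReal.ofReal ((2 : ℝ) ^ (((k - j + 1 : ℤ) : ℝ) * ε)) * b else 0)) := by
  have hd₀ : 0 < d := lt_of_lt_of_le (by positivity) h₁
  have hcut : (2 : ℝ) ^ (-j - 1 - N) ≤ d ↔ k - N ≤ j := by
    rw [show -j - 1 - N = -(j + N) - 1 by ring, two_zpow_neg_sub_one_le_iff h₁ h₂]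
    omega
  by_cases hj : k - N ≤ j
  · simp only [hcut.mpr hj, hj, if_true, mul_one]
    rw [← mul_add, ← mul_assoc, ← mul_assoc, ← ENNReal.ofReal_mul (by positivity),
      ← ENNReal.ofReal_mul (by positivity)]
    exact mul_le_mul_left (ENNReal.ofReal_le_ofReal (rpow_sub_mul_two_rpow_le h₁ hε)) _
  · simp [hcut, hj]

theorem tildeD_to_fracHajlaszGradient_general {X : Type*} [MetricSpace X] [MeasurableSpace X]
    (μ : Measure X) (s ε : ℝ) (N : ℤ) (hε : 0 < ε)
    (u : X → ℝ) (g : ℤ → X → ℝ≥0∞)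
    (hg : MemTildeD μ s ε N u g) :
    IsFracHajlaszGradient μ s u
      (fun k x => ∑' j : ℤ, if k - N ≤ j then
        ENNReal.ofReal ((2 : ℝ) ^ (((k - j + 1 : ℤ) : ℝ) * ε)) * g j x else 0) := by
  obtain ⟨hmeas, E, hE, hineq⟩ := hg
  refine ⟨fun k => Measurable.tsum fun j => ?_, E, hE,
    fun k x hx y hy hd₁ hd₂ => (hineq x hx y hy).trans ?_⟩
  · split_ifs
    exacts [(hmeas j).const_mul _, measurable_const]
  · rw [← ENNReal.tsum_add, ← ENNReal.tsum_mul_left, ← ENNReal.tsum_mul_left]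
    exact ENNReal.tsum_le_tsum fun j => tildeD_term_le hd₁ hd₂ hε.le _ _

/-- Theorem 2.1, (iii) ⟹ (i) construction: if `g⃗ ∈ 𝔻̃^{s,ε,N}(u)` then
`h_k := ∑_{j ≥ k-N} 2^{(k-j+1)ε} g_j` is in `𝔻^s(u)`. -/
theorem tildeD_to_fracHajlaszGradient {X : Type*} [MetricSpace X] [MeasurableSpace X]
    (μ : Measure X) (s ε : ℝ) (N : ℤ) (hs : 0 < s) (hε : 0 < ε) (hεs : ε ≤ s)
    (u : X → ℝ) (hu : Measurable u) (g : ℤ → X → ℝ≥0∞)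
    (hg : MemTildeD μ s ε N u g) :
    IsFracHajlaszGradient μ s u
      (fun k x => ∑' j : ℤ, if k - N ≤ j then
        ENNReal.ofReal ((2 : ℝ) ^ (((k - j + 1 : ℤ) : ℝ) * ε)) * g j x else 0) :=
  tildeD_to_fracHajlaszGradient_general μ s ε N hε u g hg
end

section
/- Let u be a measurable function on a metric measure space X, s ∈ (0,∞), ε ∈ (0,∞), and N ∈ ℤ. If g⃗ = {g_k}_{k∈ℤ} ∈ 𝔻̄^{s,ε,N}(u), then the sequence h⃗ = {h_k}_{k∈ℤ} with h_k := ∑_{j=−∞}^{k−N} 2^{(j−k)ε} g_j belongs to 𝔻^s(u). -/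
/-!
If `2^{-k-1} ≤ d(x,y) < 2^{-k}`, the cut-off `d(x,y) < 2^{-j-N}` in the `𝔻̄` sum keeps only the
indices `j ≤ k - N`, and for those `d^{s+ε} 2^{jε} ≤ d^s 2^{-kε} 2^{jε} = d^s 2^{(j-k)ε}` since
`ε ≥ 0`. Comparing the two series term by term gives the `𝔻^s` inequality with the same null set.
-/

open MeasureTheory ENNReal

/-- The class `𝔻̄^{s,ε,N}(u)`. -/
def MemBarD {X : Type*} [MetricSpace X] [MeasurableSpace X]
    (μ : Measure X) (s ε : ℝ) (N : ℤ) (u : X → ℝ) (g : ℤ → X → ℝ≥0∞) : Prop :=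
  (∀ k, Measurable (g k)) ∧
  ∃ E : Set X, μ E = 0 ∧ ∀ x ∉ E, ∀ y ∉ E,
    ENNReal.ofReal |u x - u y| ≤ ENNReal.ofReal (dist x y ^ (s + ε)) *
      ∑' k : ℤ, ENNReal.ofReal ((2 : ℝ) ^ ((k : ℝ) * ε)) * (g k x + g k y) *
        (if 0 < dist x y ∧ dist x y < (2 : ℝ) ^ (-k - N) then 1 else 0)

lemma le_sub_of_two_zpow_sub_one_lt {j k N : ℤ}
    (h : (2 : ℝ) ^ (-k - 1) < (2 : ℝ) ^ (-j - N)) : j ≤ k - N := by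
  have := (zpow_lt_zpow_iff_right₀ (by norm_num : (1 : ℝ) < 2)).mp h
  omega

lemma rpow_add_mul_two_rpow_le {d s ε : ℝ} {j k : ℤ} (hd : 0 < d) (hε : 0 ≤ ε)
    (hdk : d < (2 : ℝ) ^ (-k)) :
    d ^ (s + ε) * (2 : ℝ) ^ ((j : ℝ) * ε) ≤ d ^ s * (2 : ℝ) ^ (((j - k : ℤ) : ℝ) * ε) := by
  have hdε : d ^ ε ≤ (2 : ℝ) ^ ((-k : ℝ) * ε) := by
    rw [Real.rpow_mul zero_le_two]
    exact Real.rpow_le_rpow hd.le (by exact_mod_cast hdk.le) hε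
  calc d ^ (s + ε) * (2 : ℝ) ^ ((j : ℝ) * ε)
      = d ^ s * (d ^ ε * (2 : ℝ) ^ ((j : ℝ) * ε)) := by rw [Real.rpow_add hd]; ring
    _ ≤ d ^ s * ((2 : ℝ) ^ ((-k : ℝ) * ε) * (2 : ℝ) ^ ((j : ℝ) * ε)) := by gcongr
    _ = d ^ s * (2 : ℝ) ^ (((j - k : ℤ) : ℝ) * ε) := by
        rw [← Real.rpow_add zero_lt_two]; push_cast; ring_nf

lemma barD_term_le {d s ε : ℝ} {j k N : ℤ} (hε : 0 ≤ ε)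
    (hlo : (2 : ℝ) ^ (-k - 1) ≤ d) (hhi : d < (2 : ℝ) ^ (-k)) (a : ℝ≥0∞) :
    ENNReal.ofReal (d ^ (s + ε)) * (ENNReal.ofReal ((2 : ℝ) ^ ((j : ℝ) * ε)) * a *
        (if 0 < d ∧ d < (2 : ℝ) ^ (-j - N) then 1 else 0)) ≤
      ENNReal.ofReal (d ^ s) *
        (if j ≤ k - N then ENNReal.ofReal ((2 : ℝ) ^ (((j - k : ℤ) : ℝ) * ε)) * a else 0) := by
  by_cases hχ : 0 < d ∧ d < (2 : ℝ) ^ (-j - N)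
  · rw [if_pos hχ, if_pos (le_sub_of_two_zpow_sub_one_lt (hlo.trans_lt hχ.2)), mul_one,
      ← mul_assoc, ← mul_assoc, ← ENNReal.ofReal_mul (Real.rpow_nonneg hχ.1.le _),
      ← ENNReal.ofReal_mul (Real.rpow_nonneg hχ.1.le _)]
    exact mul_le_mul_left (ENNReal.ofReal_le_ofReal (rpow_add_mul_two_rpow_le hχ.1 hε hhi)) a
  · simp [hχ]

theorem barD_to_fracHajlaszGradient_general {X : Type*} [MetricSpace X] [MeasurableSpace X]
    (μ : Measure X) (s ε : ℝ) (N : ℤ) (hε : 0 < ε)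
    (u : X → ℝ) (g : ℤ → X → ℝ≥0∞)
    (hg : MemBarD μ s ε N u g) :
    IsFracHajlaszGradient μ s u
      (fun k x => ∑' j : ℤ, if j ≤ k - N then
        ENNReal.ofReal ((2 : ℝ) ^ (((j - k : ℤ) : ℝ) * ε)) * g j x else 0) := by
  obtain ⟨hmeas, E, hE, hbound⟩ := hg
  refine ⟨fun k => Measurable.tsum fun j => ?_, E, hE,
    fun k x hx y hy hlo hhi => (hbound x hx y hy).trans ?_⟩
  · split_ifs
    exacts [measurable_const.mul (hmeas j), measurable_const]
  · rw [← ENNReal.tsum_mul_left, ← ENNReal.tsum_add, ← ENNReal.tsum_mul_left]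
    refine ENNReal.tsum_le_tsum fun j => (barD_term_le hε.le hlo hhi _).trans_eq ?_
    split_ifs <;> simp [mul_add]

/-- Theorem 2.1, (iv) ⟹ (i) construction: if `g⃗ ∈ 𝔻̄^{s,ε,N}(u)` then
`h_k := ∑_{j ≤ k-N} 2^{(j-k)ε} g_j` is in `𝔻^s(u)`. -/
theorem barD_to_fracHajlaszGradient {X : Type*} [MetricSpace X] [MeasurableSpace X]
    (μ : Measure X) (s ε : ℝ) (N : ℤ) (hs : 0 < s) (hε : 0 < ε)
    (u : X → ℝ) (hu : Measurable u) (g : ℤ → X → ℝ≥0∞)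
    (hg : MemBarD μ s ε N u g) :
    IsFracHajlaszGradient μ s u
      (fun k x => ∑' j : ℤ, if j ≤ k - N then
        ENNReal.ofReal ((2 : ℝ) ^ (((j - k : ℤ) : ℝ) * ε)) * g j x else 0) :=
  barD_to_fracHajlaszGradient_general μ s ε N hε u g hg
end

section
/- For s, p ∈ (0,∞) and q ∈ (0,∞], and for any N₁, N₂ ∈ ℤ≥0, the norm inf over g⃗ ∈ 𝔻^{s,N₁,N₂}(u) of ‖g⃗‖_{L^p(X,ℓ^q)} is comparable (with constants independent of u) to ‖u‖_{Ṁ^s_{p,q}(X)} = inf over g⃗ ∈ 𝔻^s(u) of ‖g⃗‖_{L^p(X,ℓ^q)}. -/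
open MeasureTheory ENNReal

/-- The class `𝔻^{s,N₁,N₂}(u)`. -/
def MemDN {X : Type*} [MetricSpace X] [MeasurableSpace X]
    (μ : Measure X) (s : ℝ) (N₁ N₂ : ℕ) (u : X → ℝ) (g : ℤ → X → ℝ≥0∞) : Prop :=
  (∀ k, Measurable (g k)) ∧
  ∃ E : Set X, μ E = 0 ∧ ∀ (k : ℤ), ∀ x ∉ E, ∀ y ∉ E,
    (2 : ℝ) ^ (-k - 1 - N₁) ≤ dist x y → dist x y < (2 : ℝ) ^ (-k + N₂) →
    ENNReal.ofReal |u x - u y| ≤ ENNReal.ofReal (dist x y ^ s) * (g k x + g k y)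

/-- The `ℓ^q` norm of a sequence in `[0,∞]` (with `q ∈ (0,∞]`). -/
noncomputable def lqNorm (q : ℝ≥0∞) (a : ℤ → ℝ≥0∞) : ℝ≥0∞ :=
  if q = ∞ then ⨆ k, a k else (∑' k, a k ^ q.toReal) ^ (1 / q.toReal)

/-- The `L^p(X, ℓ^q)` norm of a sequence of functions. -/
noncomputable def LpLqNorm {X : Type*} [MeasurableSpace X] (μ : Measure X) (p : ℝ)
    (q : ℝ≥0∞) (g : ℤ → X → ℝ≥0∞) : ℝ≥0∞ :=
  (∫⁻ x, lqNorm q (fun k => g k x) ^ p ∂μ) ^ (1 / p)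

/-!
Every `g⃗ ∈ 𝔻^{s,N₁,N₂}(u)` lies in `𝔻^s(u)`, since each dyadic annulus
`2^{-k-1} ≤ d(x,y) < 2^{-k}` sits inside the enlarged one `2^{-k-1-N₁} ≤ d(x,y) < 2^{-k+N₂}`.
Conversely the enlarged annulus is covered by the dyadic annuli with indices `k - N₂, …, k + N₁`,
so for `g⃗ ∈ 𝔻^s(u)` the window sums `∑_{i=-N₂}^{N₁} g_{k+i}` form an element of
`𝔻^{s,N₁,N₂}(u)`. Since translating a sequence does not change its `ℓ^q` norm, the window sums
have `ℓ^q` norm at most `M^{1+1/q}` times that of `g⃗` pointwise, with `M = N₁ + N₂ + 1`.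
-/

theorem ENNReal.finset_sum_rpow_le_card_rpow_mul {ι : Type*} (s : Finset ι) (f : ι → ℝ≥0∞)
    {r : ℝ} (hr : 0 < r) :
    (∑ i ∈ s, f i) ^ r ≤ (s.card : ℝ≥0∞) ^ r * ∑ i ∈ s, f i ^ r := by
  set S := ∑ i ∈ s, f i ^ r
  have hle : ∀ i ∈ s, f i ≤ S ^ (1 / r) := fun i hi =>
    calc f i = (f i ^ r) ^ (1 / r) := by
          rw [← rpow_mul, mul_one_div_cancel hr.ne', rpow_one]
      _ ≤ S ^ (1 / r) := by
          gcongr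
          exact Finset.single_le_sum (f := (f · ^ r)) (fun j _ => zero_le) hi
  calc (∑ i ∈ s, f i) ^ r ≤ (s.card * S ^ (1 / r)) ^ r := by
        gcongr
        simpa only [nsmul_eq_mul] using Finset.sum_le_card_nsmul s f _ hle
    _ = s.card ^ r * S := by
        rw [mul_rpow_of_nonneg _ _ hr.le, ← rpow_mul, one_div_mul_cancel hr.ne', rpow_one]

theorem ENNReal.tsum_finset_sum_comp_add (S : Finset ℤ) (b : ℤ → ℝ≥0∞) :
    ∑' k, ∑ i ∈ S, b (k + i) = S.card * ∑' k, b k := by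
  calc ∑' k, ∑ i ∈ S, b (k + i) = ∑ i ∈ S, ∑' k, b (k + i) :=
        Summable.tsum_finsetSum fun i _ => ENNReal.summable
    _ = ∑ i ∈ S, ∑' k, b k := Finset.sum_congr rfl fun i _ => (Equiv.addRight i).tsum_eq b
    _ = S.card * ∑' k, b k := by rw [Finset.sum_const, nsmul_eq_mul]

theorem lqNorm_finset_sum_comp_add_le {q : ℝ≥0∞} (hq : 0 < q) (S : Finset ℤ) (a : ℤ → ℝ≥0∞) :
    lqNorm q (fun k => ∑ i ∈ S, a (k + i)) ≤
      S.card * (S.card : ℝ≥0∞) ^ (1 / q.toReal) * lqNorm q a := by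
  rcases eq_or_ne q ∞ with rfl | hq_top
  · simp only [lqNorm, if_true, toReal_top, _root_.div_zero, rpow_zero, mul_one]
    refine iSup_le fun k => ?_
    calc ∑ i ∈ S, a (k + i) ≤ ∑ i ∈ S, ⨆ j, a j := Finset.sum_le_sum fun i _ => le_iSup a _
      _ = S.card * ⨆ j, a j := by rw [Finset.sum_const, nsmul_eq_mul]
  · set r := q.toReal
    have hr : 0 < r := toReal_pos hq.ne' hq_top
    simp only [lqNorm, hq_top, if_false]
    calc (∑' k, (∑ i ∈ S, a (k + i)) ^ r) ^ (1 / r)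
        ≤ (∑' k, (S.card : ℝ≥0∞) ^ r * ∑ i ∈ S, a (k + i) ^ r) ^ (1 / r) := by
          gcongr with k
          exact ENNReal.finset_sum_rpow_le_card_rpow_mul S _ hr
      _ = ((S.card : ℝ≥0∞) ^ r * (S.card * ∑' k, a k ^ r)) ^ (1 / r) := by
          rw [ENNReal.tsum_mul_left, ENNReal.tsum_finset_sum_comp_add S fun k => a k ^ r]
      _ = S.card * (S.card : ℝ≥0∞) ^ (1 / r) * (∑' k, a k ^ r) ^ (1 / r) := by
          rw [mul_rpow_of_nonneg _ _ (by positivity), mul_rpow_of_nonneg _ _ (by positivity),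
            ← rpow_mul, mul_one_div_cancel hr.ne', rpow_one, mul_assoc]

theorem LpLqNorm_le_const_mul {X : Type*} [MeasurableSpace X] (μ : Measure X) {p : ℝ}
    (hp : 0 < p) (q : ℝ≥0∞) {C : ℝ≥0∞} (hC : C ≠ ∞) {g h : ℤ → X → ℝ≥0∞}
    (hgh : ∀ x, lqNorm q (fun k => h k x) ≤ C * lqNorm q (fun k => g k x)) :
    LpLqNorm μ p q h ≤ C * LpLqNorm μ p q g := by
  unfold LpLqNorm
  calc (∫⁻ x, lqNorm q (fun k => h k x) ^ p ∂μ) ^ (1 / p)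
      ≤ (∫⁻ x, C ^ p * lqNorm q (fun k => g k x) ^ p ∂μ) ^ (1 / p) := by
        gcongr with x
        rw [← mul_rpow_of_nonneg _ _ hp.le]
        exact rpow_le_rpow (hgh x) hp.le
    _ = C * (∫⁻ x, lqNorm q (fun k => g k x) ^ p ∂μ) ^ (1 / p) := by
        rw [lintegral_const_mul' _ _ (rpow_ne_top_of_nonneg hp.le hC),
          mul_rpow_of_nonneg _ _ (by positivity), ← rpow_mul, mul_one_div_cancel hp.ne',
          rpow_one]

theorem ENNReal.iInf₂_le_mul_iInf₂ {α : Type*} {S T : Set α} {f : α → ℝ≥0∞} {C : ℝ≥0∞}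
    (hC₀ : C ≠ 0) (hC : C ≠ ∞) (hST : ∀ g ∈ S, ∃ h ∈ T, f h ≤ C * f g) :
    ⨅ h ∈ T, f h ≤ C * ⨅ g ∈ S, f g := by
  simp only [mul_iInf_of_ne hC₀ hC]
  refine le_iInf₂ fun g hg => ?_
  obtain ⟨h, hh, hfh⟩ := hST g hg
  exact (iInf₂_le h hh).trans hfh

theorem MemDN.isFracHajlaszGradient {X : Type*} [MetricSpace X] [MeasurableSpace X]
    {μ : Measure X} {s : ℝ} {N₁ N₂ : ℕ} {u : X → ℝ} {g : ℤ → X → ℝ≥0∞}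
    (hg : MemDN μ s N₁ N₂ u g) : IsFracHajlaszGradient μ s u g := by
  obtain ⟨hmeas, E, hE, hu⟩ := hg
  refine ⟨hmeas, E, hE, fun k x hx y hy hlo hhi => hu k x hx y hy ?_ ?_⟩
  · exact (zpow_le_zpow_right₀ one_le_two (by omega)).trans hlo
  · exact hhi.trans_le (zpow_le_zpow_right₀ one_le_two (by omega))

theorem exists_dyadic_annulus_of_mem_window {d : ℝ} {k : ℤ} {N₁ N₂ : ℕ}
    (hlo : (2 : ℝ) ^ (-k - 1 - N₁) ≤ d) (hhi : d < (2 : ℝ) ^ (-k + N₂)) :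
    ∃ i ∈ Finset.Icc (-(N₂ : ℤ)) N₁,
      (2 : ℝ) ^ (-(k + i) - 1) ≤ d ∧ d < (2 : ℝ) ^ (-(k + i)) := by
  obtain ⟨n, hn_lo, hn_hi⟩ :=
    exists_mem_Ico_zpow ((_root_.zpow_pos two_pos _).trans_le hlo) (by norm_num : (1 : ℝ) < 2)
  have h₁ : -k - 1 - (N₁ : ℤ) < n + 1 :=
    (zpow_lt_zpow_iff_right₀ (by norm_num : (1 : ℝ) < 2)).mp (hlo.trans_lt hn_hi)
  have h₂ : n < -k + (N₂ : ℤ) :=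
    (zpow_lt_zpow_iff_right₀ (by norm_num : (1 : ℝ) < 2)).mp (hn_lo.trans_lt hhi)
  refine ⟨-n - 1 - k, Finset.mem_Icc.mpr ⟨by omega, by omega⟩, ?_, ?_⟩
  · rwa [show -(k + (-n - 1 - k)) - 1 = n by ring]
  · rwa [show -(k + (-n - 1 - k)) = n + 1 by ring]

noncomputable def windowSum {X : Type*} (N₁ N₂ : ℕ) (g : ℤ → X → ℝ≥0∞) (k : ℤ) (x : X) :
    ℝ≥0∞ :=
  ∑ i ∈ Finset.Icc (-(N₂ : ℤ)) N₁, g (k + i) x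

theorem IsFracHajlaszGradient.memDN_windowSum {X : Type*} [MetricSpace X] [MeasurableSpace X]
    {μ : Measure X} {s : ℝ} {u : X → ℝ} {g : ℤ → X → ℝ≥0∞}
    (hg : IsFracHajlaszGradient μ s u g) (N₁ N₂ : ℕ) :
    MemDN μ s N₁ N₂ u (windowSum N₁ N₂ g) := by
  obtain ⟨hmeas, E, hE, hu⟩ := hg
  refine ⟨fun k => Finset.measurable_sum _ fun i _ => hmeas _, E, hE,
    fun k x hx y hy hlo hhi => ?_⟩
  obtain ⟨i, hi, hi_lo, hi_hi⟩ := exists_dyadic_annulus_of_mem_window hlo hhi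
  calc ENNReal.ofReal |u x - u y|
      ≤ ENNReal.ofReal (dist x y ^ s) * (g (k + i) x + g (k + i) y) :=
        hu (k + i) x hx y hy hi_lo hi_hi
    _ ≤ ENNReal.ofReal (dist x y ^ s) * (windowSum N₁ N₂ g k x + windowSum N₁ N₂ g k y) := by
        gcongr <;>
          exact Finset.single_le_sum (f := fun i => g (k + i) _) (fun _ _ => zero_le) hi

theorem DN_norm_equiv_hajlaszTL_norm_general {X : Type*} [MetricSpace X] [MeasurableSpace X]
    (μ : Measure X) (s p : ℝ) (q : ℝ≥0∞) (hp : 0 < p) (hq : 0 < q)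
    (N₁ N₂ : ℕ) :
    ∃ C : ℝ≥0∞, 0 < C ∧ C ≠ ∞ ∧ ∀ u : X → ℝ, Measurable u →
      ((⨅ g ∈ {g : ℤ → X → ℝ≥0∞ | MemDN μ s N₁ N₂ u g}, LpLqNorm μ p q g) ≤
        C * ⨅ g ∈ {g : ℤ → X → ℝ≥0∞ | IsFracHajlaszGradient μ s u g}, LpLqNorm μ p q g) ∧
      ((⨅ g ∈ {g : ℤ → X → ℝ≥0∞ | IsFracHajlaszGradient μ s u g}, LpLqNorm μ p q g) ≤
        C * ⨅ g ∈ {g : ℤ → X → ℝ≥0∞ | MemDN μ s N₁ N₂ u g}, LpLqNorm μ p q g) := by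
  set M : ℝ≥0∞ := ((Finset.Icc (-(N₂ : ℤ)) N₁).card : ℝ≥0∞)
  set C : ℝ≥0∞ := M * M ^ (1 / q.toReal)
  have hM : 1 ≤ M := Nat.one_le_cast.mpr (Finset.card_pos.mpr ⟨0, by simp⟩)
  have hC : 1 ≤ C := one_le_mul hM ((one_rpow _).ge.trans (rpow_le_rpow hM (by positivity)))
  have hC_top : C ≠ ∞ := by finiteness
  refine ⟨C, zero_lt_one.trans_le hC, hC_top, fun u _ => ⟨?_, ?_⟩⟩
  · refine ENNReal.iInf₂_le_mul_iInf₂ (zero_lt_one.trans_le hC).ne' hC_top fun g hg =>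
      ⟨windowSum N₁ N₂ g, hg.memDN_windowSum N₁ N₂, ?_⟩
    exact LpLqNorm_le_const_mul μ hp q hC_top fun x =>
      lqNorm_finset_sum_comp_add_le hq _ fun k => g k x
  · exact ENNReal.iInf₂_le_mul_iInf₂ (zero_lt_one.trans_le hC).ne' hC_top fun g hg =>
      ⟨g, hg.isFracHajlaszGradient, le_mul_of_one_le_left zero_le hC⟩

/-- Theorem 2.1 (I), (i) ⇔ (ii): for `s, p ∈ (0,∞)`, `q ∈ (0,∞]` and `N₁, N₂ ∈ ℤ₊`,
`inf_{g⃗ ∈ 𝔻^{s,N₁,N₂}(u)} ‖g⃗‖_{L^p(ℓ^q)} ∼ ‖u‖_{Ṁ^s_{p,q}(X)}` with constants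
independent of `u`. -/
theorem DN_norm_equiv_hajlaszTL_norm {X : Type*} [MetricSpace X] [MeasurableSpace X]
    (μ : Measure X) (s p : ℝ) (q : ℝ≥0∞) (hs : 0 < s) (hp : 0 < p) (hq : 0 < q)
    (N₁ N₂ : ℕ) :
    ∃ C : ℝ≥0∞, 0 < C ∧ C ≠ ∞ ∧ ∀ u : X → ℝ, Measurable u →
      ((⨅ g ∈ {g : ℤ → X → ℝ≥0∞ | MemDN μ s N₁ N₂ u g}, LpLqNorm μ p q g) ≤
        C * ⨅ g ∈ {g : ℤ → X → ℝ≥0∞ | IsFracHajlaszGradient μ s u g}, LpLqNorm μ p q g) ∧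
      ((⨅ g ∈ {g : ℤ → X → ℝ≥0∞ | IsFracHajlaszGradient μ s u g}, LpLqNorm μ p q g) ≤
        C * ⨅ g ∈ {g : ℤ → X → ℝ≥0∞ | MemDN μ s N₁ N₂ u g}, LpLqNorm μ p q g) :=
  DN_norm_equiv_hajlaszTL_norm_general μ s p q hp hq N₁ N₂
end

section
/- Poincaré-type inequality for fractional Hajłasz gradients: there exists a constant C (depending only on n and s) such that for all x ∈ ℝⁿ, k ∈ ℤ, all locally integrable u, and all g⃗ ∈ 𝔻^s(u), one has inf_{c∈ℝ} ⨍_{B(x,2^{-k})} |u(y) − c| dy ≤ C 2^{-ks} ∑_{j=k−3}^{k} ⨍_{B(x,2^{-k+2})} g_j(y) dy. -/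
/-!
Fix `r = 2^{-k}` and a point `x'` with `|x - x'| = 2r`. For `y ∈ B(x, r)` and `z ∈ B(x', r/4)`
one has `r/2 < |y - z| < 4r`, so `|y - z|` lies in one of the dyadic annuli of the scales
`j = k-3, …, k`, and there `|u(y) - u(z)| ≤ (4r)^s ∑_j (g_j(y) + g_j(z))`. Averaging in `y` over
`B(x, r)` bounds `⨍_{B(x,r)} |u - u(z)|`; averaging this in `z` over `B(x', r/4)` bounds the
infimum over the constants `c`. Both balls lie in `B(x, 4r)` and have a fixed fraction of its
volume, which gives the averages of `g_j` over `B(x, 4r)`.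
-/

open MeasureTheory ENNReal

open Metric Module

section Average

variable {X : Type*} [MeasurableSpace X] {μ : Measure X} {A : Set X}

theorem laverage_const_mul {K : ℝ≥0∞} (hK : K ≠ ∞) (f : X → ℝ≥0∞) :
    ⨍⁻ x, K * f x ∂μ = K * ⨍⁻ x, f x ∂μ :=
  lintegral_const_mul' K f hK

theorem setLAverage_add_const (hA₀ : μ A ≠ 0) (hA : μ A ≠ ∞) (f : X → ℝ≥0∞) (c : ℝ≥0∞) :
    ⨍⁻ x in A, (f x + c) ∂μ = ⨍⁻ x in A, f x ∂μ + c := by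
  rw [setLAverage_eq, setLAverage_eq, lintegral_add_right _ measurable_const, setLIntegral_const,
    ENNReal.add_div, ENNReal.mul_div_cancel_right hA₀ hA]

theorem setLAverage_le_mul_setLAverage_of_subset {D : Set X} {c : ℝ≥0∞} (f : X → ℝ≥0∞)
    (hAD : A ⊆ D) (hμ : μ D = c * μ A) (hc₀ : c ≠ 0) (hc : c ≠ ∞) :
    ⨍⁻ x in A, f x ∂μ ≤ c * ⨍⁻ x in D, f x ∂μ := by
  rw [setLAverage_eq, setLAverage_eq, hμ, ← mul_div_assoc, ENNReal.mul_div_mul_left _ _ hc₀ hc]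
  exact ENNReal.div_le_div_right (lintegral_mono_set hAD) _

theorem iInf_setLAverage_abs_sub_le {A' : Set X} {u : X → ℝ} {G : X → ℝ≥0∞} {K : ℝ≥0∞}
    (hK : K ≠ ∞) (hA₀ : μ A ≠ 0) (hA : μ A ≠ ∞) (hA'₀ : μ A' ≠ 0) (hA' : μ A' ≠ ∞)
    (h : ∀ᵐ z ∂μ.restrict A', ∀ᵐ y ∂μ.restrict A,
      ENNReal.ofReal |u y - u z| ≤ K * (G y + G z)) :
    ⨅ c : ℝ, ⨍⁻ y in A, ENNReal.ofReal |u y - c| ∂μ ≤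
      K * (⨍⁻ y in A, G y ∂μ + ⨍⁻ z in A', G z ∂μ) := by
  have h_avg : ∀ᵐ z ∂μ.restrict A',
      ⨍⁻ y in A, ENNReal.ofReal |u y - u z| ∂μ ≤ K * (G z + ⨍⁻ y in A, G y ∂μ) := by
    filter_upwards [h] with z hz
    calc ⨍⁻ y in A, ENNReal.ofReal |u y - u z| ∂μ ≤ ⨍⁻ y in A, K * (G y + G z) ∂μ :=
          laverage_mono_ae hz
      _ = K * (G z + ⨍⁻ y in A, G y ∂μ) := by
          rw [laverage_const_mul hK, setLAverage_add_const hA₀ hA, add_comm]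
  calc ⨅ c : ℝ, ⨍⁻ y in A, ENNReal.ofReal |u y - c| ∂μ
      = ⨍⁻ _ in A', ⨅ c : ℝ, ⨍⁻ y in A, ENNReal.ofReal |u y - c| ∂μ ∂μ :=
        (setLAverage_const hA'₀ hA' _).symm
    _ ≤ ⨍⁻ z in A', ⨍⁻ y in A, ENNReal.ofReal |u y - u z| ∂μ ∂μ :=
        lintegral_mono fun z => iInf_le _ (u z)
    _ ≤ ⨍⁻ z in A', K * (G z + ⨍⁻ y in A, G y ∂μ) ∂μ := laverage_mono_ae h_avg
    _ = K * (⨍⁻ y in A, G y ∂μ + ⨍⁻ z in A', G z ∂μ) := by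
        rw [laverage_const_mul hK, setLAverage_add_const hA'₀ hA', add_comm]

end Average

theorem exists_mem_Icc_zpow_two_le_lt {d : ℝ} {k : ℤ} (h₁ : (2 : ℝ) ^ (-k - 1) < d)
    (h₂ : d < (2 : ℝ) ^ (-k + 2)) :
    ∃ j ∈ Finset.Icc (k - 3) k, (2 : ℝ) ^ (-j - 1) ≤ d ∧ d < (2 : ℝ) ^ (-j) := by
  obtain ⟨m, hm₁, hm₂⟩ := exists_mem_Ico_zpow (h₁.trans' (by positivity)) one_lt_two
  refine ⟨-m - 1, Finset.mem_Icc.2 ⟨?_, ?_⟩, by simpa using hm₁, by simpa [add_comm] using hm₂⟩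
  · have := (zpow_lt_zpow_iff_right₀ (one_lt_two (α := ℝ))).1 (hm₁.trans_lt h₂)
    omega
  · have := (zpow_lt_zpow_iff_right₀ (one_lt_two (α := ℝ))).1 (h₁.trans hm₂)
    omega

theorem IsFracHajlaszGradient.ae_ae_abs_sub_le {X : Type*} [MetricSpace X] [MeasurableSpace X]
    {μ : Measure X} {s : ℝ} {u : X → ℝ} {g : ℤ → X → ℝ≥0∞}
    (hg : IsFracHajlaszGradient μ s u g) (hs : 0 ≤ s) (k : ℤ) :
    ∀ᵐ z ∂μ, ∀ᵐ y ∂μ, (2 : ℝ) ^ (-k - 1) < dist y z → dist y z < (2 : ℝ) ^ (-k + 2) →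
      ENNReal.ofReal |u y - u z| ≤
        ENNReal.ofReal (((2 : ℝ) ^ (-k + 2)) ^ s) * ∑ j ∈ Finset.Icc (k - 3) k, (g j y + g j z) := by
  obtain ⟨-, E, hE, hgE⟩ := hg
  have hE' := measure_eq_zero_iff_ae_notMem.1 hE
  filter_upwards [hE'] with z hz
  filter_upwards [hE'] with y hy h₁ h₂
  obtain ⟨j, hj, hj₁, hj₂⟩ := exists_mem_Icc_zpow_two_le_lt h₁ h₂
  calc ENNReal.ofReal |u y - u z| ≤ ENNReal.ofReal (dist y z ^ s) * (g j y + g j z) :=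
        hgE j y hy z hz hj₁ hj₂
    _ ≤ _ := mul_le_mul' (ENNReal.ofReal_le_ofReal (Real.rpow_le_rpow dist_nonneg h₂.le hs))
        (Finset.single_le_sum (f := fun i => g i y + g i z) (fun _ _ => zero_le) hj)

theorem dist_mem_Ioo_of_mem_ball {X : Type*} [PseudoMetricSpace X] {x x' y z : X} {r : ℝ}
    (hxx' : dist x x' = 2 * r) (hy : y ∈ ball x r) (hz : z ∈ ball x' (r / 4)) :
    r / 2 < dist y z ∧ dist y z < 4 * r := by
  rw [mem_ball] at hy hz
  constructor <;> linarith [dist_triangle4 x y z x', dist_triangle4 y x x' z, dist_comm x y,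
    dist_comm x' z, dist_nonneg (x := y) (y := x)]

section AddHaar

variable {E : Type*} [NormedAddCommGroup E] [NormedSpace ℝ E] [FiniteDimensional ℝ E]
  [MeasurableSpace E] [BorelSpace E] (μ : Measure E) [μ.IsAddHaarMeasure]

theorem addHaar_ball_mul_eq (x y : E) {a : ℝ} (ha : 0 < a) (r : ℝ) :
    μ (ball x (a * r)) = ENNReal.ofReal (a ^ finrank ℝ E) * μ (ball y r) := by
  rw [Measure.addHaar_ball_mul_of_pos μ x ha, Measure.addHaar_ball_center μ y]

theorem IsFracHajlaszGradient.iInf_setLAverage_le {s : ℝ} {u : E → ℝ} {g : ℤ → E → ℝ≥0∞}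
    (hg : IsFracHajlaszGradient μ s u g) (hs : 0 ≤ s) (x : E) (k : ℤ) :
    ⨅ c : ℝ, ⨍⁻ y in ball x ((2 : ℝ) ^ (-k)), ENNReal.ofReal |u y - c| ∂μ ≤
      ENNReal.ofReal (((2 : ℝ) ^ (-k + 2)) ^ s * (4 ^ finrank ℝ E + 16 ^ finrank ℝ E)) *
        ⨍⁻ y in ball x ((2 : ℝ) ^ (-k + 2)), ∑ j ∈ Finset.Icc (k - 3) k, g j y ∂μ := by
  rcases subsingleton_or_nontrivial E with hE | hE
  · refine (iInf_le _ (u x)).trans ?_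
    simp [Subsingleton.elim _ x]
  set r : ℝ := (2 : ℝ) ^ (-k)
  have hr : 0 < r := by positivity
  have h2r : (2 : ℝ) ^ (-k - 1) = r / 2 := by
    rw [zpow_sub₀ (two_ne_zero' ℝ), zpow_one]
  have h4r : (2 : ℝ) ^ (-k + 2) = 4 * r := by
    rw [zpow_add₀ (two_ne_zero' ℝ)]
    ring
  obtain ⟨w, hw⟩ := exists_norm_eq E (by positivity : 0 ≤ 2 * r)
  have hxx' : dist x (x + w) = 2 * r := by
    rw [dist_eq_norm', add_sub_cancel_left, hw]
  set G : E → ℝ≥0∞ := fun y => ∑ j ∈ Finset.Icc (k - 3) k, g j y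
  set K : ℝ≥0∞ := ENNReal.ofReal (((2 : ℝ) ^ (-k + 2)) ^ s)
  have hpt : ∀ᵐ z ∂μ.restrict (ball (x + w) (r / 4)), ∀ᵐ y ∂μ.restrict (ball x r),
      ENNReal.ofReal |u y - u z| ≤ K * (G y + G z) := by
    filter_upwards [ae_restrict_of_ae (hg.ae_ae_abs_sub_le hs k),
      ae_restrict_mem measurableSet_ball] with z hz hzB
    filter_upwards [ae_restrict_of_ae hz, ae_restrict_mem measurableSet_ball] with y hy hyB
    obtain ⟨h₁, h₂⟩ := dist_mem_Ioo_of_mem_ball hxx' hyB hzB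
    simpa only [G, Finset.sum_add_distrib] using hy (h2r ▸ h₁) (h4r ▸ h₂)
  have hD : ball x ((2 : ℝ) ^ (-k + 2)) = ball x (4 * r) := by rw [h4r]
  calc ⨅ c : ℝ, ⨍⁻ y in ball x r, ENNReal.ofReal |u y - c| ∂μ
      ≤ K * (⨍⁻ y in ball x r, G y ∂μ + ⨍⁻ z in ball (x + w) (r / 4), G z ∂μ) :=
        iInf_setLAverage_abs_sub_le ENNReal.ofReal_ne_top (measure_ball_pos μ x hr).ne'
          measure_ball_lt_top.ne (measure_ball_pos μ _ (by positivity)).ne'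
          measure_ball_lt_top.ne hpt
    _ ≤ K * (ENNReal.ofReal (4 ^ finrank ℝ E) * ⨍⁻ y in ball x (4 * r), G y ∂μ +
          ENNReal.ofReal (16 ^ finrank ℝ E) * ⨍⁻ y in ball x (4 * r), G y ∂μ) := by
        gcongr
        · exact setLAverage_le_mul_setLAverage_of_subset G (ball_subset_ball (by linarith))
            (addHaar_ball_mul_eq μ x x four_pos r) (by positivity) ENNReal.ofReal_ne_top
        · refine setLAverage_le_mul_setLAverage_of_subset G
            (ball_subset_ball' (by rw [dist_comm, hxx']; linarith)) ?_ (by positivity)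
            ENNReal.ofReal_ne_top
          rw [← addHaar_ball_mul_eq μ x (x + w) (by norm_num : (0 : ℝ) < 16)]
          ring_nf
    _ = _ := by
        rw [hD, ← add_mul, ← mul_assoc, ← ENNReal.ofReal_add (by positivity) (by positivity),
          ← ENNReal.ofReal_mul (by positivity)]

end AddHaar

theorem poincare_type_fracHajlasz_general (n : ℕ) (s : ℝ) (hs0 : 0 < s) :
    ∃ C : ℝ, 0 < C ∧
      ∀ (x : EuclideanSpace ℝ (Fin n)) (k : ℤ) (u : EuclideanSpace ℝ (Fin n) → ℝ)
        (g : ℤ → EuclideanSpace ℝ (Fin n) → ℝ≥0∞),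
        Measurable u → LocallyIntegrable u volume →
        IsFracHajlaszGradient volume s u g →
        (⨅ c : ℝ, (∫⁻ y in Metric.ball x ((2 : ℝ) ^ (-k)), ENNReal.ofReal |u y - c|) /
            volume (Metric.ball x ((2 : ℝ) ^ (-k)))) ≤
          ENNReal.ofReal (C * (2 : ℝ) ^ (-(k : ℝ) * s)) *
            ∑ j ∈ Finset.Icc (k - 3) k,
              (∫⁻ y in Metric.ball x ((2 : ℝ) ^ (-k + 2)), g j y) /
                volume (Metric.ball x ((2 : ℝ) ^ (-k + 2))) := by
  refine ⟨4 ^ s * (4 ^ n + 16 ^ n), by positivity, fun x k u g _ _ hg => ?_⟩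
  have hscale : ((2 : ℝ) ^ (-k + 2)) ^ s = 4 ^ s * 2 ^ (-(k : ℝ) * s) := by
    rw [← Real.rpow_intCast, ← Real.rpow_mul two_pos.le, show (4 : ℝ) = 2 ^ (2 : ℝ) by norm_num,
      ← Real.rpow_mul two_pos.le, ← Real.rpow_add two_pos]
    push_cast
    ring_nf
  have h_avg_sum : ∑ j ∈ Finset.Icc (k - 3) k, (∫⁻ y in ball x ((2 : ℝ) ^ (-k + 2)), g j y) /
      volume (ball x ((2 : ℝ) ^ (-k + 2))) =
      ⨍⁻ y in ball x ((2 : ℝ) ^ (-k + 2)), ∑ j ∈ Finset.Icc (k - 3) k, g j y ∂volume := by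
    simp only [setLAverage_eq, div_eq_mul_inv, Finset.sum_mul,
      lintegral_finsetSum _ fun j _ => hg.1 j]
  calc _ = ⨅ c : ℝ, ⨍⁻ y in ball x ((2 : ℝ) ^ (-k)), ENNReal.ofReal |u y - c| ∂volume := by
        simp only [setLAverage_eq]
    _ ≤ _ := hg.iInf_setLAverage_le volume hs0.le x k
    _ = _ := by
        rw [finrank_euclideanSpace_fin, hscale, h_avg_sum]
        ring_nf

/-- Lemma 2.1: Poincaré-type inequality for fractional Hajłasz gradients on `ℝⁿ`:
`inf_c ⨍_{B(x,2^{-k})} |u-c| ≤ C 2^{-ks} ∑_{j=k-3}^{k} ⨍_{B(x,2^{-k+2})} g_j`. -/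
theorem poincare_type_fracHajlasz (n : ℕ) (s : ℝ) (hs0 : 0 < s) (hs1 : s ≤ 1) :
    ∃ C : ℝ, 0 < C ∧
      ∀ (x : EuclideanSpace ℝ (Fin n)) (k : ℤ) (u : EuclideanSpace ℝ (Fin n) → ℝ)
        (g : ℤ → EuclideanSpace ℝ (Fin n) → ℝ≥0∞),
        Measurable u → LocallyIntegrable u volume →
        IsFracHajlaszGradient volume s u g →
        (⨅ c : ℝ, (∫⁻ y in Metric.ball x ((2 : ℝ) ^ (-k)), ENNReal.ofReal |u y - c|) /
            volume (Metric.ball x ((2 : ℝ) ^ (-k)))) ≤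
          ENNReal.ofReal (C * (2 : ℝ) ^ (-(k : ℝ) * s)) *
            ∑ j ∈ Finset.Icc (k - 3) k,
              (∫⁻ y in Metric.ball x ((2 : ℝ) ^ (-k + 2)), g j y) /
                volume (Metric.ball x ((2 : ℝ) ^ (-k + 2))) :=
  poincare_type_fracHajlasz_general n s hs0
end

section
/- Let s ∈ (0,1], p ∈ (0,1], and ε, ε′ ∈ (0,s) with ε < ε′. If u is measurable on ℝⁿ and g⃗ = {g_j} ∈ 𝔻^s(u), then the function g := ( ∑_{j ≥ k−2} 2^{-j(s−ε)p} g_j^p )^{1/p} is an ε-gradient of u on the ball B(x, 2^{-k+1}), for every x ∈ ℝⁿ and k ∈ ℤ. -/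
open MeasureTheory ENNReal

/-- `g` is an `ε`-gradient of `u` on the set `B`. -/
def IsHajlaszGradientOn {X : Type*} [MetricSpace X] [MeasurableSpace X]
    (μ : Measure X) (ε : ℝ) (B : Set X) (u : X → ℝ) (g : X → ℝ≥0∞) : Prop :=
  Measurable g ∧
  ∃ E : Set X, μ E = 0 ∧ ∀ x ∈ B \ E, ∀ y ∈ B \ E,
    ENNReal.ofReal |u x - u y| ≤ ENNReal.ofReal (dist x y ^ ε) * (g x + g y)

/-! Two points of a ball of radius `2^{-m-1}` are at a distance `d ∈ [2^{-j-1}, 2^{-j})` with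
`j ≥ m`, so only the scales `j ≥ m` of `g⃗` are ever needed there; at such a scale
`d^s ≤ d^ε 2^{-j(s-ε)}` moves the surplus smoothness into the weight, and each weighted term
`2^{-j(s-ε)} g_j` is dominated by the `ℓ^p`-sum of all of them. -/

noncomputable def dyadicTailGradient {X : Type*} (s ε p : ℝ) (g : ℤ → X → ℝ≥0∞) (m : ℤ)
    (y : X) : ℝ≥0∞ :=
  (∑' j : ℤ, if m ≤ j then
    ENNReal.ofReal ((2 : ℝ) ^ (-(j : ℝ) * (s - ε) * p)) * g j y ^ p else 0) ^ (1 / p)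

section DyadicTail

variable {X : Type*} {s ε p : ℝ} {g : ℤ → X → ℝ≥0∞} {m j : ℤ}

theorem measurable_dyadicTailGradient [MeasurableSpace X] (hg : ∀ j, Measurable (g j)) :
    Measurable (dyadicTailGradient s ε p g m) := by
  refine (Measurable.tsum fun j => ?_).pow_const _
  split_ifs
  exacts [measurable_const.mul ((hg j).pow_const _), measurable_const]

theorem ofReal_two_rpow_mul_le_dyadicTailGradient (hp : 0 < p) (hj : m ≤ j) (y : X) :
    ENNReal.ofReal ((2 : ℝ) ^ (-(j : ℝ) * (s - ε))) * g j y ≤ dyadicTailGradient s ε p g m y := by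
  have hterm := ENNReal.rpow_le_rpow
    (ENNReal.le_tsum (f := fun i : ℤ => if m ≤ i then
      ENNReal.ofReal ((2 : ℝ) ^ (-(i : ℝ) * (s - ε) * p)) * g i y ^ p else 0) j)
    (one_div_nonneg.mpr hp.le)
  simp only [if_pos hj] at hterm
  rwa [ENNReal.mul_rpow_of_nonneg _ _ (one_div_nonneg.mpr hp.le),
    ENNReal.ofReal_rpow_of_pos (by positivity), ← ENNReal.rpow_mul,
    ← Real.rpow_mul zero_le_two, mul_one_div, mul_div_cancel_right₀ _ hp.ne',
    mul_one_div_cancel hp.ne', ENNReal.rpow_one] at hterm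

end DyadicTail

theorem exists_dyadic_scale_ge_of_mem_ball {X : Type*} [MetricSpace X] {x y z : X} {m : ℤ}
    (hy : y ∈ Metric.ball x ((2 : ℝ) ^ (-m - 1))) (hz : z ∈ Metric.ball x ((2 : ℝ) ^ (-m - 1)))
    (hyz : y ≠ z) :
    ∃ j : ℤ, m ≤ j ∧ (2 : ℝ) ^ (-j - 1) ≤ dist y z ∧ dist y z < (2 : ℝ) ^ (-j) := by
  obtain ⟨i, hi_le, hi_lt⟩ := exists_mem_Ico_zpow (dist_pos.mpr hyz) _root_.one_lt_two
  have hdist : dist y z < (2 : ℝ) ^ (-m) := calc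
    dist y z ≤ dist y x + dist x z := dist_triangle y x z
    _ < (2 : ℝ) ^ (-m - 1) + (2 : ℝ) ^ (-m - 1) :=
      add_lt_add (Metric.mem_ball.mp hy) (Metric.mem_ball'.mp hz)
    _ = (2 : ℝ) ^ (-m) := by
      rw [← two_mul, ← zpow_one_add₀ two_ne_zero]
      ring_nf
  have hi : i < -m := (zpow_lt_zpow_iff_right₀ _root_.one_lt_two).mp (hi_le.trans_lt hdist)
  refine ⟨-i - 1, by omega, ?_, ?_⟩
  · rwa [show -(-i - 1) - 1 = i by ring]
  · rwa [show -(-i - 1) = i + 1 by ring]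

theorem ofReal_rpow_le_of_lt_two_zpow {d s ε : ℝ} {j : ℤ} (hd : 0 < d) (hεs : ε ≤ s)
    (hdj : d < (2 : ℝ) ^ (-j)) :
    ENNReal.ofReal (d ^ s) ≤
      ENNReal.ofReal (d ^ ε) * ENNReal.ofReal ((2 : ℝ) ^ (-(j : ℝ) * (s - ε))) := by
  rw [← ENNReal.ofReal_mul (by positivity)]
  refine ENNReal.ofReal_le_ofReal ?_
  calc d ^ s = d ^ ε * d ^ (s - ε) := by rw [← Real.rpow_add hd, add_sub_cancel]
    _ ≤ d ^ ε * ((2 : ℝ) ^ (-j)) ^ (s - ε) := by gcongr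
    _ = d ^ ε * (2 : ℝ) ^ (-(j : ℝ) * (s - ε)) := by
      rw [← Real.rpow_intCast, ← Real.rpow_mul zero_le_two, Int.cast_neg]

theorem IsFracHajlaszGradient.isHajlaszGradientOn_ball {X : Type*} [MetricSpace X]
    [MeasurableSpace X] {μ : Measure X} {s ε p : ℝ} {u : X → ℝ} {g : ℤ → X → ℝ≥0∞}
    (hg : IsFracHajlaszGradient μ s u g) (hεs : ε ≤ s) (hp : 0 < p) (x : X) (m : ℤ) :
    IsHajlaszGradientOn μ ε (Metric.ball x ((2 : ℝ) ^ (-m - 1))) u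
      (dyadicTailGradient s ε p g m) := by
  obtain ⟨hg_meas, E, hE, hgE⟩ := hg
  refine ⟨measurable_dyadicTailGradient hg_meas, E, hE, ?_⟩
  rintro y ⟨hyB, hyE⟩ z ⟨hzB, hzE⟩
  rcases eq_or_ne y z with rfl | hyz
  · simp
  obtain ⟨j, hmj, hj_le, hj_lt⟩ := exists_dyadic_scale_ge_of_mem_ball hyB hzB hyz
  calc ENNReal.ofReal |u y - u z| ≤ ENNReal.ofReal (dist y z ^ s) * (g j y + g j z) :=
        hgE j y hyE z hzE hj_le hj_lt
    _ ≤ ENNReal.ofReal (dist y z ^ ε) *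
          (ENNReal.ofReal ((2 : ℝ) ^ (-(j : ℝ) * (s - ε))) * g j y +
            ENNReal.ofReal ((2 : ℝ) ^ (-(j : ℝ) * (s - ε))) * g j z) := by
      rw [← mul_add, ← mul_assoc]
      gcongr
      exact ofReal_rpow_le_of_lt_two_zpow (dist_pos.mpr hyz) hεs hj_lt
    _ ≤ ENNReal.ofReal (dist y z ^ ε) *
          (dyadicTailGradient s ε p g m y + dyadicTailGradient s ε p g m z) := by
      gcongr <;> exact ofReal_two_rpow_mul_le_dyadicTailGradient hp hmj _

theorem truncated_sum_is_gradient_on_ball_general (n : ℕ) (s p ε ε' : ℝ)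
    (hp0 : 0 < p)
    (hε' : ε < ε') (hε's : ε' < s)
    (u : EuclideanSpace ℝ (Fin n) → ℝ)
    (g : ℤ → EuclideanSpace ℝ (Fin n) → ℝ≥0∞)
    (hg : IsFracHajlaszGradient volume s u g)
    (x : EuclideanSpace ℝ (Fin n)) (k : ℤ) :
    IsHajlaszGradientOn volume ε (Metric.ball x ((2 : ℝ) ^ (-k + 1))) u
      (fun y => (∑' j : ℤ, if k - 2 ≤ j then
        ENNReal.ofReal ((2 : ℝ) ^ (-(j : ℝ) * (s - ε) * p)) * g j y ^ p else 0) ^ (1 / p)) := by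
  have hradius : -k + 1 = -(k - 2) - 1 := by ring
  rw [hradius]
  exact hg.isHajlaszGradientOn_ball (hε'.trans hε's).le hp0 x (k - 2)

/-- From the proof of Lemma 2.3: if `g⃗ ∈ 𝔻^s(u)`, then
`g := (∑_{j ≥ k-2} 2^{-j(s-ε)p} g_j^p)^{1/p}` is an `ε`-gradient of `u` on
`B(x, 2^{-k+1})`. -/
theorem truncated_sum_is_gradient_on_ball (n : ℕ) (s p ε ε' : ℝ)
    (hs0 : 0 < s) (hs1 : s ≤ 1) (hp0 : 0 < p) (hp1 : p ≤ 1)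
    (hε : 0 < ε) (hε' : ε < ε') (hε's : ε' < s)
    (u : EuclideanSpace ℝ (Fin n) → ℝ) (hu : Measurable u)
    (g : ℤ → EuclideanSpace ℝ (Fin n) → ℝ≥0∞)
    (hg : IsFracHajlaszGradient volume s u g)
    (x : EuclideanSpace ℝ (Fin n)) (k : ℤ) :
    IsHajlaszGradientOn volume ε (Metric.ball x ((2 : ℝ) ^ (-k + 1))) u
      (fun y => (∑' j : ℤ, if k - 2 ≤ j then
        ENNReal.ofReal ((2 : ℝ) ^ (-(j : ℝ) * (s - ε) * p)) * g j y ^ p else 0) ^ (1 / p)) :=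
  truncated_sum_is_gradient_on_ball_general n s p ε ε' hp0 hε' hε's u g hg x k
end

section
/- Telescoping estimate on RD-spaces: let (X,d,μ) be an Ahlfors-regular-type doubling metric measure space with reverse doubling, and let K₀ ∈ ℕ satisfy μ(B(x, 2^{K₀} r)) ≥ 2 μ(B(x,r)) for all x and admissible r. Then for every u ∈ L¹_loc(X), every Lebesgue point x of u, and every admissible k ∈ ℤ, |u(x) − u_{B(x,2^{-k})}| ≤ C ∑_{j ≥ k} ⨍_{B(x,2^{-j})} ⨍_{B(x,2^{-j+K₀+1}) ∖ B(x,2^{-j+1})} |u(y) − u(z)| dμ(z) dμ(y), with C depending only on the doubling constants and K₀. -/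
/-!
Compare the averages of `u` on consecutive dyadic balls `B_{j+1} ⊆ B_j` through its average on
the annulus `A_j = B(x, 2^{-j+K₀+1}) \ B(x, 2^{-j+1})`: each of `|u_{B_j} - u_{A_j}|` and
`|u_{B_{j+1}} - u_{A_j}|` is at most the double average of `|u y - u z|` over `B_j × A_j`, the
second after enlarging `B_{j+1}` to `B_j` at the cost of the doubling constant `C₂ 2ⁿ`. Reverse
doubling gives `μ A_j ≥ μ B(x, 2^{-j+1}) > 0`, so the annulus averages are genuine averages.
Summing these increments along `j ≥ k` and letting `j → ∞` at the Lebesgue point `x` gives the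
estimate with `C = 1 + C₂ 2ⁿ`.
-/

open MeasureTheory ENNReal Filter Set Topology Metric

namespace MeasureTheory

variable {α : Type*} [MeasurableSpace α] {ρ ν : Measure α} {f g : α → ℝ}

theorem lipschitzWith_integral_abs_sub [IsProbabilityMeasure ν] (hg : Integrable g ν) :
    LipschitzWith 1 fun t => ∫ z, |t - g z| ∂ν := by
  have hi : ∀ t, Integrable (fun z => |t - g z|) ν := fun t => ((integrable_const t).sub hg).abs
  refine LipschitzWith.of_dist_le_mul fun s t => ?_
  rw [NNReal.coe_one, one_mul, Real.dist_eq, Real.dist_eq, ← integral_sub (hi s) (hi t)]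
  calc |∫ z, (|s - g z| - |t - g z|) ∂ν| ≤ ∫ z, |(|s - g z| - |t - g z|)| ∂ν :=
        abs_integral_le_integral_abs
    _ ≤ ∫ _, |s - t| ∂ν :=
        integral_mono ((hi s).sub (hi t)).abs (integrable_const _) fun z =>
          (abs_abs_sub_abs_le_abs_sub _ _).trans_eq (by ring_nf)
    _ = |s - t| := by simp

theorem integrable_integral_abs_sub [IsFiniteMeasure ρ] [IsProbabilityMeasure ν]
    (hf : Integrable f ρ) (hg : Integrable g ν) :
    Integrable (fun y => ∫ z, |f y - g z| ∂ν) ρ := by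
  -- Composing with the Lipschitz map `t ↦ ∫ z, |t - g z| ∂ν` avoids any joint measurability.
  have hL := lipschitzWith_integral_abs_sub hg
  refine Integrable.mono' (hf.abs.add (integrable_const (∫ z, |0 - g z| ∂ν)))
    (hL.continuous.comp_aestronglyMeasurable hf.aestronglyMeasurable) (ae_of_all _ fun y => ?_)
  have hdist := hL.dist_le_mul (f y) 0
  rw [NNReal.coe_one, one_mul, Real.dist_eq, Real.dist_eq, sub_zero] at hdist
  rw [Pi.add_apply, Real.norm_of_nonneg (integral_nonneg fun _ => abs_nonneg _)]
  linarith [le_abs_self (∫ z, |f y - g z| ∂ν - ∫ z, |0 - g z| ∂ν)]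

theorem abs_sub_integral_le [IsProbabilityMeasure ν] (hg : Integrable g ν) (t : ℝ) :
    |t - ∫ z, g z ∂ν| ≤ ∫ z, |t - g z| ∂ν := by
  have : t - ∫ z, g z ∂ν = ∫ z, (t - g z) ∂ν := by
    rw [integral_sub (integrable_const t) hg, integral_const, probReal_univ, one_smul]
  exact this ▸ abs_integral_le_integral_abs

theorem abs_integral_sub_integral_le [IsProbabilityMeasure ρ] [IsProbabilityMeasure ν]
    (hf : Integrable f ρ) (hg : Integrable g ν) :
    |∫ y, f y ∂ρ - ∫ z, g z ∂ν| ≤ ∫ y, ∫ z, |f y - g z| ∂ν ∂ρ := by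
  rw [abs_sub_comm]
  refine (abs_sub_integral_le hf _).trans (integral_mono (((integrable_const _).sub hf).abs)
    (integrable_integral_abs_sub hf hg) fun y => ?_)
  rw [abs_sub_comm]
  exact abs_sub_integral_le hg (f y)

theorem abs_average_sub_average_le [IsFiniteMeasure ρ] [NeZero ρ] [IsFiniteMeasure ν] [NeZero ν]
    (hf : Integrable f ρ) (hg : Integrable g ν) :
    |⨍ y, f y ∂ρ - ⨍ z, g z ∂ν| ≤ ⨍ y, ⨍ z, |f y - g z| ∂ν ∂ρ :=
  abs_integral_sub_integral_le hf.to_average hg.to_average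

theorem average_le_mul_average_of_le [IsFiniteMeasure ν] (hρν : ρ ≤ ν) (hf₀ : 0 ≤ᵐ[ν] f)
    (hf : Integrable f ν) :
    ⨍ x, f x ∂ρ ≤ ν.real univ / ρ.real univ * ⨍ x, f x ∂ν := by
  rcases eq_zero_or_neZero ν with rfl | _
  · simp [le_antisymm hρν (Measure.zero_le ρ)]
  have hν : ν.real univ ≠ 0 := (measureReal_univ_pos (μ := ν)).ne'
  rw [average_eq, average_eq, smul_eq_mul, smul_eq_mul, div_mul_eq_mul_div,
    mul_inv_cancel_left₀ hν, div_eq_inv_mul]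
  exact mul_le_mul_of_nonneg_left (integral_mono_measure hρν hf₀ hf) (by positivity)

theorem abs_setAverage_sub_setAverage_le {μ : Measure α} {u : α → ℝ} {S B A : Set α} {D : ℝ}
    (hSB : S ⊆ B) (hS : μ S ≠ 0) (hB : μ B ≠ ∞) (hA₀ : μ A ≠ 0) (hA : μ A ≠ ∞)
    (hD : μ.real B ≤ D * μ.real S) (huB : IntegrableOn u B μ) (huA : IntegrableOn u A μ) :
    |⨍ y in S, u y ∂μ - ⨍ y in B, u y ∂μ| ≤ (1 + D) * ⨍ y in B, ⨍ z in A, |u y - u z| ∂μ ∂μ := by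
  have hSB' : μ.restrict S ≤ μ.restrict B := Measure.restrict_mono hSB le_rfl
  have : IsFiniteMeasure (μ.restrict B) := isFiniteMeasure_restrict.2 hB
  have : IsFiniteMeasure (μ.restrict S) := isFiniteMeasure_of_le _ hSB'
  have : IsFiniteMeasure (μ.restrict A) := isFiniteMeasure_restrict.2 hA
  have : NeZero (μ.restrict S) := ⟨mt Measure.restrict_eq_zero.1 hS⟩
  have : NeZero (μ.restrict B) := ⟨mt Measure.restrict_eq_zero.1 (mt (measure_mono_null hSB) hS)⟩
  have : NeZero (μ.restrict A) := ⟨mt Measure.restrict_eq_zero.1 hA₀⟩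
  set T := ⨍ y in B, ⨍ z in A, |u y - u z| ∂μ ∂μ
  have hT : 0 ≤ T := integral_nonneg fun _ => integral_nonneg fun _ => abs_nonneg _
  have hratio : μ.real B / μ.real S ≤ D :=
    (div_le_iff₀ (ENNReal.toReal_pos hS (measure_mono hSB |>.trans_lt hB.lt_top).ne)).2 hD
  have hS_le : ⨍ y in S, ⨍ z in A, |u y - u z| ∂μ ∂μ ≤ D * T := by
    refine (average_le_mul_average_of_le hSB' ?_ ?_).trans ?_
    · exact ae_of_all _ fun _ => integral_nonneg fun _ => abs_nonneg _
    · exact integrable_integral_abs_sub huB huA.to_average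
    · rw [measureReal_restrict_apply_univ, measureReal_restrict_apply_univ]
      exact mul_le_mul_of_nonneg_right hratio hT
  calc |⨍ y in S, u y ∂μ - ⨍ y in B, u y ∂μ|
      ≤ |⨍ y in S, u y ∂μ - ⨍ z in A, u z ∂μ| + |⨍ y in B, u y ∂μ - ⨍ z in A, u z ∂μ| :=
        (abs_sub_le _ (⨍ z in A, u z ∂μ) _).trans_eq (by rw [abs_sub_comm (⨍ z in A, u z ∂μ)])
    _ ≤ D * T + T := add_le_add
        ((abs_average_sub_average_le (huB.mono_set hSB) huA).trans hS_le)
        (abs_average_sub_average_le huB huA)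
    _ = (1 + D) * T := by ring

theorem measure_le_measure_sdiff_of_two_mul_le {μ : Measure α} {s t : Set α} (hs : μ s ≠ ∞)
    (h : 2 * μ s ≤ μ t) : μ s ≤ μ (t \ s) :=
  (ENNReal.le_sub_of_add_le_left hs (by rwa [← two_mul])).trans le_measure_sdiff

end MeasureTheory

theorem abs_setAverage_ball_sub_setAverage_ball_le {X : Type*} [PseudoMetricSpace X]
    [MeasurableSpace X] {μ : Measure X} {u : X → ℝ} {x : X} {r R s t : ℝ} {c : ℝ≥0∞}
    (hrR : r ≤ R) (hr : 0 < r) (hs : 0 < s) (ht : 0 < t)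
    (hball : ∀ ρ, 0 < ρ → 0 < μ (ball x ρ) ∧ μ (ball x ρ) < ∞)
    (hdoub : μ (ball x R) ≤ c * μ (ball x r)) (hc : c ≠ ∞)
    (hrev : 2 * μ (ball x s) ≤ μ (ball x t)) (hu : ∀ ρ, IntegrableOn u (ball x ρ) μ) :
    |⨍ y in ball x r, u y ∂μ - ⨍ y in ball x R, u y ∂μ| ≤
      (1 + c.toReal) * ⨍ y in ball x R, ⨍ z in ball x t \ ball x s, |u y - u z| ∂μ ∂μ := by
  have hR := hr.trans_le hrR
  have hsA : μ (ball x s) ≤ μ (ball x t \ ball x s) :=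
    measure_le_measure_sdiff_of_two_mul_le (hball s hs).2.ne hrev
  refine abs_setAverage_sub_setAverage_le (ball_subset_ball hrR) (hball r hr).1.ne'
    (hball R hR).2.ne ((hball s hs).1.trans_le hsA).ne'
    ((measure_mono sdiff_subset).trans_lt (hball t ht).2).ne ?_ (hu R)
    ((hu t).mono_set sdiff_subset)
  rw [Measure.real, Measure.real, ← ENNReal.toReal_mul]
  exact ENNReal.toReal_mono (mul_ne_top hc (hball r hr).2.ne) hdoub

theorem tendsto_two_zpow_neg_nhdsGT_zero (k : ℤ) :
    Tendsto (fun i : ℕ => (2 : ℝ) ^ (-(k + i))) atTop (𝓝[>] 0) := by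
  have h : Tendsto (fun i : ℕ => (2 : ℝ) ^ k * 2 ^ i) atTop atTop :=
    (tendsto_pow_atTop_atTop_of_one_lt (one_lt_two : (1 : ℝ) < 2)).const_mul_atTop
      (zpow_pos two_pos k)
  refine (tendsto_inv_atTop_nhdsGT_zero.comp h).congr fun i => ?_
  simp [zpow_neg, zpow_add₀, zpow_natCast]

theorem ENNReal.tsum_nat_add_le_tsum_int (k : ℤ) (g : ℤ → ℝ≥0∞) :
    ∑' i : ℕ, g (k + i) ≤ ∑' j : ℤ, if k ≤ j then g j else 0 :=
  calc ∑' i : ℕ, g (k + i) = ∑' i : ℕ, (fun j => if k ≤ j then g j else 0) (k + i) :=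
        tsum_congr fun i => (if_pos (by omega)).symm
    _ ≤ _ := ENNReal.tsum_comp_le_tsum_of_injective (fun a b h => by simpa using h) _

theorem telescoping_RD_general (C₁ C₂ : ℝ≥0∞) (κ n : ℝ) (K₀ : ℕ)
    (hC₂ : C₂ ≠ ∞) :
    ∃ C : ℝ≥0∞, 0 < C ∧ C ≠ ∞ ∧
      ∀ (X : Type) [MetricSpace X] [MeasurableSpace X] [BorelSpace X] (μ : Measure X),
        (∀ (x : X) (r : ℝ), 0 < r → 0 < μ (Metric.ball x r) ∧ μ (Metric.ball x r) < ∞) →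
        (∀ (x : X) (r lam : ℝ), 0 < r → 1 ≤ lam →
          C₁ * ENNReal.ofReal (lam ^ κ) * μ (Metric.ball x r) ≤ μ (Metric.ball x (lam * r)) ∧
          μ (Metric.ball x (lam * r)) ≤ C₂ * ENNReal.ofReal (lam ^ n) * μ (Metric.ball x r)) →
        (∀ (x : X) (r : ℝ), 0 < r →
          2 * μ (Metric.ball x r) ≤ μ (Metric.ball x ((2 : ℝ) ^ K₀ * r))) →
        ∀ u : X → ℝ, (∀ (z : X) (r : ℝ), IntegrableOn u (Metric.ball z r) μ) →
        ∀ x : X,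
          Filter.Tendsto (fun r => ⨍ y in Metric.ball x r, u y ∂μ)
            (nhdsWithin 0 (Set.Ioi 0)) (nhds (u x)) →
        ∀ k : ℤ,
          ENNReal.ofReal |u x - ⨍ y in Metric.ball x ((2 : ℝ) ^ (-k)), u y ∂μ| ≤
            C * ∑' j : ℤ, if k ≤ j then
              ENNReal.ofReal (⨍ y in Metric.ball x ((2 : ℝ) ^ (-j)),
                ⨍ z in Metric.ball x ((2 : ℝ) ^ (-j + K₀ + 1)) \ Metric.ball x ((2 : ℝ) ^ (-j + 1)),
                  |u y - u z| ∂μ ∂μ)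
            else 0 := by
  set D := (C₂ * ENNReal.ofReal (2 ^ n)).toReal
  refine ⟨ENNReal.ofReal (1 + D), ENNReal.ofReal_pos.2 (by positivity), ENNReal.ofReal_ne_top, ?_⟩
  intro X _ _ _ μ hball hdoub hrev u hu x hx k
  set a : ℤ → ℝ := fun j => ⨍ y in Metric.ball x ((2 : ℝ) ^ (-j)), u y ∂μ
  set T : ℤ → ℝ := fun j => ⨍ y in Metric.ball x ((2 : ℝ) ^ (-j)),
    ⨍ z in Metric.ball x ((2 : ℝ) ^ (-j + K₀ + 1)) \ Metric.ball x ((2 : ℝ) ^ (-j + 1)),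
      |u y - u z| ∂μ ∂μ
  have hr (m : ℤ) : 0 < (2 : ℝ) ^ m := zpow_pos two_pos m
  have hstep (j : ℤ) : edist (a j) (a (j + 1)) ≤ ENNReal.ofReal (1 + D) * ENNReal.ofReal (T j) := by
    have hdbl : (2 : ℝ) * 2 ^ (-(j + 1)) = 2 ^ (-j) := by
      rw [← zpow_one_add₀ two_ne_zero]; ring_nf
    have hann : (2 : ℝ) ^ K₀ * 2 ^ (-j + 1) = 2 ^ (-j + K₀ + 1) := by
      rw [← zpow_natCast, ← zpow_add₀ two_ne_zero]; ring_nf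
    rw [edist_dist, Real.dist_eq, abs_sub_comm, ← ENNReal.ofReal_mul (by positivity)]
    exact ENNReal.ofReal_le_ofReal (abs_setAverage_ball_sub_setAverage_ball_le
      (zpow_le_zpow_right₀ one_le_two (by omega)) (hr _) (hr _) (hr _) (hball x)
      (hdbl ▸ (hdoub x _ 2 (hr _) one_le_two).2) (mul_ne_top hC₂ ofReal_ne_top)
      (hann ▸ hrev x _ (hr _)) (hu x))
  have hlim : Tendsto (fun i : ℕ => a (k + i)) atTop (𝓝 (u x)) :=
    hx.comp (tendsto_two_zpow_neg_nhdsGT_zero k)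
  calc ENNReal.ofReal |u x - a k| = edist (a (k + (0 : ℕ))) (u x) := by
        rw [edist_dist, Real.dist_eq, abs_sub_comm, Nat.cast_zero, add_zero]
    _ ≤ ∑' i : ℕ, ENNReal.ofReal (1 + D) * ENNReal.ofReal (T (k + i)) :=
        edist_le_tsum_of_edist_le_of_tendsto₀ _
          (fun i => by simpa only [Nat.cast_succ, add_assoc] using hstep (k + i)) hlim
    _ = ENNReal.ofReal (1 + D) * ∑' i : ℕ, ENNReal.ofReal (T (k + i)) := ENNReal.tsum_mul_left
    _ ≤ _ := by
        gcongr
        exact ENNReal.tsum_nat_add_le_tsum_int k fun j => ENNReal.ofReal (T j)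

/-- Telescoping estimate (4.6) on RD-spaces: for `u ∈ L¹_loc` and a Lebesgue point `x`,
`|u(x) − u_{B(x,2^{-k})}| ≤ C ∑_{j ≥ k} ⨍_{B(x,2^{-j})} ⨍_{B(x,2^{-j+K₀+1}) ∖ B(x,2^{-j+1})}
|u(y) − u(z)| dμ(z) dμ(y)`, with `C` depending only on the doubling constants and `K₀`. -/
theorem telescoping_RD (C₁ C₂ : ℝ≥0∞) (κ n : ℝ) (K₀ : ℕ)
    (hC₁0 : 0 < C₁) (hC₁1 : C₁ ≤ 1) (hC₂1 : 1 ≤ C₂) (hC₂ : C₂ ≠ ∞)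
    (hκ0 : 0 < κ) (hκn : κ ≤ n) (hK₀ : 0 < K₀) :
    ∃ C : ℝ≥0∞, 0 < C ∧ C ≠ ∞ ∧
      ∀ (X : Type) [MetricSpace X] [MeasurableSpace X] [BorelSpace X] (μ : Measure X),
        (∀ (x : X) (r : ℝ), 0 < r → 0 < μ (Metric.ball x r) ∧ μ (Metric.ball x r) < ∞) →
        (∀ (x : X) (r lam : ℝ), 0 < r → 1 ≤ lam →
          C₁ * ENNReal.ofReal (lam ^ κ) * μ (Metric.ball x r) ≤ μ (Metric.ball x (lam * r)) ∧
          μ (Metric.ball x (lam * r)) ≤ C₂ * ENNReal.ofReal (lam ^ n) * μ (Metric.ball x r)) →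
        (∀ (x : X) (r : ℝ), 0 < r →
          2 * μ (Metric.ball x r) ≤ μ (Metric.ball x ((2 : ℝ) ^ K₀ * r))) →
        ∀ u : X → ℝ, (∀ (z : X) (r : ℝ), IntegrableOn u (Metric.ball z r) μ) →
        ∀ x : X,
          Filter.Tendsto (fun r => ⨍ y in Metric.ball x r, u y ∂μ)
            (nhdsWithin 0 (Set.Ioi 0)) (nhds (u x)) →
        ∀ k : ℤ,
          ENNReal.ofReal |u x - ⨍ y in Metric.ball x ((2 : ℝ) ^ (-k)), u y ∂μ| ≤
            C * ∑' j : ℤ, if k ≤ j then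
              ENNReal.ofReal (⨍ y in Metric.ball x ((2 : ℝ) ^ (-j)),
                ⨍ z in Metric.ball x ((2 : ℝ) ^ (-j + K₀ + 1)) \ Metric.ball x ((2 : ℝ) ^ (-j + 1)),
                  |u y - u z| ∂μ ∂μ)
            else 0 :=
  telescoping_RD_general C₁ C₂ κ n K₀ hC₂
end

section
/- Equivalence with the Bourdon–Pajot Besov space: for s ∈ (0,∞) and p ∈ [1,∞) on an RD-space X, the space Ḃ^s_p(X) of locally p-integrable u with ∫_X ∫_X |u(x)−u(y)|^p / (d(x,y)^{sp} V(x,y)) dμ(y) dμ(x) < ∞ coincides with the Hajłasz–Besov space Ṅ^s_{p,p}(X) (= Ṁ^s_{p,p}(X)), with equivalent norms. -/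
/-!
Hajłasz ⇒ Besov. If `2^(-k-1) ≤ d(x, y) < 2^(-k)`, the Besov integrand at `(x, y)` is at most
`2^(p-1) (gₖ(x)^p + gₖ(y)^p) / V(x, y)`, and doubling gives `V(x, y) ≥ μ(B(x, 2^(-k-1)))` and
`D V(x, y) ≥ μ(B(y, 2^(-k-1)))`. Exchanging `x` and `y` (Tonelli) moves the `gₖ(y)` term onto `x`;
integrating `1 / μ(B(x, 2^(-k-1)))` over the annulus around `x` costs one more factor `D`.

Besov ⇒ Hajłasz. `gₖ(x)^p = C 2^((k+1)sp) ⨍_{B(x, 2^(1-k))} |u(x) - u(z)|^p dμ(z)` is a fractional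
gradient: average `|u(x) - u(y)|^p ≲ |u(x) - u(z)|^p + |u(y) - u(z)|^p` over `z ∈ B(x, 2^(-k-1))`.
Summing over `k`, only the scales `2^(1-k) > d(x, z)` see `z`; their balls have measure at least
`V(x, z)` and their weights form a geometric series bounded by a multiple of `d(x, z)^(-sp)`.

The RD condition gives doubling at every radius, and since balls have positive finite measure, `X`
is separable, so the kernels above are measurable on `X × X`.
-/

open MeasureTheory ENNReal

/-- The `p`-th power of the Bourdon–Pajot Besov norm:
`∫∫ |u(x)−u(y)|^p / (d(x,y)^{sp} V(x,y)) dμ(y) dμ(x)`, where `V(x,y) = μ(B(x,d(x,y)))`. -/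
noncomputable def BPnormP {X : Type*} [MetricSpace X] [MeasurableSpace X]
    (μ : Measure X) (s p : ℝ) (u : X → ℝ) : ℝ≥0∞ :=
  ∫⁻ x, ∫⁻ y, ENNReal.ofReal |u x - u y| ^ p /
    (ENNReal.ofReal (dist x y ^ (s * p)) * μ (Metric.ball x (dist x y))) ∂μ ∂μ

/-- The `p`-th power of the Hajłasz–Besov norm of `Ṁ^s_{p,p}(X) = Ṅ^s_{p,p}(X)`. -/
noncomputable def MnormP {X : Type*} [MetricSpace X] [MeasurableSpace X]
    (μ : Measure X) (s p : ℝ) (u : X → ℝ) : ℝ≥0∞ :=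
  ⨅ g ∈ {g : ℤ → X → ℝ≥0∞ | IsFracHajlaszGradient μ s u g},
    ∫⁻ x, ∑' k : ℤ, g k x ^ p ∂μ

open Metric Set

namespace BourdonPajot

variable {X : Type*} [MetricSpace X]

def dyadicAnnulus (k : ℤ) : Set (X × X) :=
  {q | (2 : ℝ) ^ (-k - 1) ≤ dist q.1 q.2 ∧ dist q.1 q.2 < 2 ^ (-k)}

theorem exists_mem_dyadicAnnulus {x y : X} (h : x ≠ y) : ∃ k, (x, y) ∈ dyadicAnnulus k := by
  have hd : 0 < dist x y := dist_pos.2 h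
  refine ⟨-Int.log 2 (dist x y) - 1, ?_, ?_⟩
  · simpa using Int.zpow_log_le_self one_lt_two hd
  · simpa [add_comm] using Int.lt_zpow_succ_log_self one_lt_two (dist x y)

theorem two_zpow_neg (k : ℤ) : (2 : ℝ) ^ (-k) = 2 * 2 ^ (-k - 1) := by
  rw [← zpow_one_add₀ two_ne_zero]; ring_nf

theorem inv_le_mul_inv_of_le_mul {V W D : ℝ≥0∞} (hV₀ : V ≠ 0) (hV : V ≠ ∞) (hW₀ : W ≠ 0)
    (hW : W ≠ ∞) (h : W ≤ D * V) : V⁻¹ ≤ D * W⁻¹ := by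
  rw [← div_eq_mul_inv, ENNReal.le_div_iff_mul_le (Or.inl hW₀) (Or.inl hW), mul_comm,
    ← div_eq_mul_inv, ENNReal.div_le_iff hV₀ hV]
  exact h

variable [MeasurableSpace X] {μ : Measure X}

def IsBallDoubling (μ : Measure X) (D : ℝ≥0∞) : Prop :=
  ∀ (x : X) (r : ℝ), 0 < r → μ (ball x (2 * r)) ≤ D * μ (ball x r)

theorem isBallDoubling_of_doubling_lt_two_mul_ediam {C₂ : ℝ≥0∞} {n : ℝ} (hC₂ : 1 ≤ C₂)
    (hn : 0 ≤ n)
    (hRD : ∀ (x : X) (r lam : ℝ), 0 < r →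
      ENNReal.ofReal r < 2 * ediam (univ : Set X) → 1 ≤ lam →
      ENNReal.ofReal (lam * r) < 2 * ediam (univ : Set X) →
      μ (ball x (lam * r)) ≤ C₂ * ENNReal.ofReal (lam ^ n) * μ (ball x r)) :
    IsBallDoubling μ (C₂ * ENNReal.ofReal (2 ^ n)) := by
  intro x r hr
  set Δ := ediam (univ : Set X)
  by_cases h2r : ENNReal.ofReal (2 * r) < 2 * Δ
  · exact hRD x r 2 hr ((ENNReal.ofReal_le_ofReal (by linarith)).trans_lt h2r) one_le_two h2r
  have hΔr : Δ ≤ ENNReal.ofReal r := by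
    rw [not_lt, ENNReal.ofReal_mul zero_le_two, ENNReal.ofReal_ofNat] at h2r
    exact (ENNReal.mul_le_mul_iff_right two_ne_zero ENNReal.ofNat_ne_top).1 h2r
  have hball : ∀ ρ, r < ρ → ball x ρ = univ := fun ρ hρ => eq_univ_of_forall fun y => by
    refine mem_ball'.2 (lt_of_le_of_lt ?_ hρ)
    rw [dist_edist, ← ENNReal.toReal_ofReal hr.le]
    exact ENNReal.toReal_mono ENNReal.ofReal_ne_top
      ((edist_le_ediam_of_mem (mem_univ x) (mem_univ y)).trans hΔr)
  have hone : 1 ≤ C₂ * ENNReal.ofReal (2 ^ n) :=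
    one_le_mul hC₂ (ENNReal.one_le_ofReal.2 (Real.one_le_rpow one_le_two hn))
  by_cases hr_univ : ball x r = univ
  · calc μ (ball x (2 * r)) ≤ μ (ball x r) := by rw [hr_univ]; exact measure_mono (subset_univ _)
      _ ≤ _ := le_mul_of_one_le_left' hone
  -- Otherwise `diam X = r`, and a ball of radius `2r` is no larger than one of radius `3r/2`.
  obtain ⟨y, hy⟩ := (ne_univ_iff_exists_notMem _).1 hr_univ
  have hΔ : Δ = ENNReal.ofReal r := by
    refine le_antisymm hΔr (le_trans ?_ (edist_le_ediam_of_mem (mem_univ x) (mem_univ y)))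
    rw [edist_dist, dist_comm]
    exact ENNReal.ofReal_le_ofReal (not_lt.1 hy)
  have h2Δ : 2 * Δ = ENNReal.ofReal (2 * r) := by
    rw [hΔ, ENNReal.ofReal_mul zero_le_two, ENNReal.ofReal_ofNat]
  have key := hRD x r (3 / 2) hr
    (by rw [h2Δ]; exact (ENNReal.ofReal_lt_ofReal_iff (by positivity)).2 (by linarith))
    (by norm_num)
    (by rw [h2Δ]; exact (ENNReal.ofReal_lt_ofReal_iff (by positivity)).2 (by linarith))
  calc μ (ball x (2 * r)) = μ (ball x (3 / 2 * r)) := by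
        rw [hball _ (by linarith), hball _ (by linarith)]
    _ ≤ C₂ * ENNReal.ofReal ((3 / 2) ^ n) * μ (ball x r) := key
    _ ≤ _ := by
        have : (3 / 2 : ℝ) ^ n ≤ 2 ^ n := Real.rpow_le_rpow (by norm_num) (by norm_num) hn
        gcongr

theorem measure_ball_two_pow_mul_le {D : ℝ≥0∞} (hD : IsBallDoubling μ D) (x : X) {r : ℝ}
    (hr : 0 < r) (m : ℕ) : μ (ball x (2 ^ m * r)) ≤ D ^ m * μ (ball x r) := by
  induction m with
  | zero => simp
  | succ m ih =>
    calc μ (ball x (2 ^ (m + 1) * r)) = μ (ball x (2 * (2 ^ m * r))) := by ring_nf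
      _ ≤ D * μ (ball x (2 ^ m * r)) := hD x _ (by positivity)
      _ ≤ D * (D ^ m * μ (ball x r)) := by gcongr
      _ = D ^ (m + 1) * μ (ball x r) := by ring

theorem sigmaFinite_of_measure_ball_lt_top (hfin : ∀ x r, μ (ball x r) < ∞) :
    SigmaFinite μ := by
  rcases isEmpty_or_nonempty X with hX | ⟨⟨x₀⟩⟩
  · rw [μ.eq_zero_of_isEmpty]; infer_instance
  · exact ⟨⟨⟨fun m : ℕ => ball x₀ (m + 1), fun _ => mem_univ _, fun _ => hfin _ _,
      iUnion_ball_nat_succ x₀⟩⟩⟩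

/-- Balls of radius `ε / 2` around an `ε`-separated set are disjoint and of positive measure, so
in an s-finite space such a set is countable; a maximal one is an `ε`-net. -/
theorem secondCountableTopology_of_measure_ball_pos [OpensMeasurableSpace X] [SFinite μ]
    (hpos : ∀ x r, 0 < r → 0 < μ (ball x r)) : SecondCountableTopology X := by
  refine secondCountable_of_almost_dense_set fun ε hε => ?_
  obtain ⟨N, hN⟩ := zorn_subset {N : Set X | N.Pairwise fun x y => ε ≤ dist x y}
    fun c hcN hc => ⟨⋃₀ c, hc.pairwise_sUnion.2 fun s hs => hcN hs, fun _ => subset_sUnion_of_mem⟩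
  refine ⟨N, ?_, fun x => ?_⟩
  · have hdisj : Pairwise fun y z : N => Disjoint (ball (y : X) (ε / 2)) (ball z (ε / 2)) :=
      fun y z hyz => ball_disjoint_ball (by linarith [hN.prop y.2 z.2 (Subtype.coe_ne_coe.2 hyz)])
    have := Measure.countable_meas_pos_of_disjoint_iUnion (μ := μ)
      (fun _ => measurableSet_ball) hdisj
    simp only [hpos _ _ (half_pos hε), ofPred_true, countable_univ_iff] at this
    exact countable_coe_iff.1 this
  · by_contra! hfar
    have hx : x ∈ N := hN.mem_of_prop_insert <| pairwise_insert.2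
      ⟨hN.prop, fun y hy _ => ⟨(hfar y hy).le, dist_comm x y ▸ (hfar y hy).le⟩⟩
    exact (hfar x hx).not_ge (by simpa using hε.le)

section Measurability

variable [OpensMeasurableSpace X] [SecondCountableTopology X] [SFinite μ]

theorem measurable_setLIntegral_ball {F : X → X → ℝ≥0∞} (hF : Measurable (Function.uncurry F))
    (r : ℝ) : Measurable fun x => ∫⁻ z in ball x r, F x z ∂μ := by
  have hS : MeasurableSet {q : X × X | q.2 ∈ ball q.1 r} :=
    measurableSet_lt (continuous_snd.dist continuous_fst).measurable measurable_const
  simp_rw [← lintegral_indicator measurableSet_ball]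
  exact (hF.indicator hS).lintegral_prod_right'

theorem measurable_measure_ball (r : ℝ) : Measurable fun x => μ (ball x r) := by
  simpa using measurable_setLIntegral_ball (μ := μ) (F := fun _ _ => 1) measurable_const r

end Measurability

section HajlaszToBesov

theorem measurableSet_dyadicAnnulus [OpensMeasurableSpace X] [SecondCountableTopology X] (k : ℤ) :
    MeasurableSet (dyadicAnnulus k : Set (X × X)) :=
  (measurableSet_le measurable_const continuous_dist.measurable).inter
    (measurableSet_lt continuous_dist.measurable measurable_const)

noncomputable def gradientKernel (μ : Measure X) (p : ℝ) (g : ℤ → X → ℝ≥0∞) (q : X × X) : ℝ≥0∞ :=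
  ∑' k, (dyadicAnnulus k).indicator (fun q => g k q.1 ^ p / μ (ball q.1 (2 ^ (-k - 1)))) q

variable {D : ℝ≥0∞} {p : ℝ} {g : ℤ → X → ℝ≥0∞}

section

variable [OpensMeasurableSpace X] [SecondCountableTopology X] [SFinite μ]

theorem measurable_indicator_dyadicAnnulus (hg : ∀ k, Measurable (g k)) (k : ℤ) :
    Measurable fun q : X × X =>
      (dyadicAnnulus k).indicator (fun q => g k q.1 ^ p / μ (ball q.1 (2 ^ (-k - 1)))) q :=
  ((((hg k).comp measurable_fst).pow_const p).div
    ((measurable_measure_ball _).comp measurable_fst)).indicator (measurableSet_dyadicAnnulus k)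

theorem measurable_gradientKernel (hg : ∀ k, Measurable (g k)) :
    Measurable (gradientKernel μ p g) :=
  Measurable.tsum (measurable_indicator_dyadicAnnulus hg)

theorem lintegral_gradientKernel_le (hD : IsBallDoubling μ D)
    (hpos : ∀ x r, 0 < r → 0 < μ (ball x r)) (hfin : ∀ x r, μ (ball x r) < ∞)
    (hg : ∀ k, Measurable (g k)) (x : X) :
    ∫⁻ y, gradientKernel μ p g (x, y) ∂μ ≤ D * ∑' k, g k x ^ p := by
  have hterm : ∀ k, Measurable fun y =>
      (dyadicAnnulus k).indicator (fun q => g k q.1 ^ p / μ (ball q.1 (2 ^ (-k - 1)))) (x, y) :=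
    fun k => (measurable_indicator_dyadicAnnulus hg k).comp measurable_prodMk_left
  simp only [gradientKernel]
  rw [lintegral_tsum fun k => (hterm k).aemeasurable, ← ENNReal.tsum_mul_left]
  refine ENNReal.tsum_le_tsum fun k => ?_
  set r : ℝ := 2 ^ (-k - 1)
  have hr : 0 < r := by positivity
  have hslice : ∀ y, (dyadicAnnulus k).indicator (fun q => g k q.1 ^ p / μ (ball q.1 r)) (x, y)
      ≤ (ball x (2 * r)).indicator (fun _ => g k x ^ p / μ (ball x r)) y := fun y => by
    by_cases hy : (x, y) ∈ dyadicAnnulus k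
    · rw [indicator_of_mem hy, indicator_of_mem (mem_ball'.2 (two_zpow_neg k ▸ hy.2))]
    · rw [indicator_of_notMem hy]; exact zero_le
  calc ∫⁻ y, (dyadicAnnulus k).indicator (fun q => g k q.1 ^ p / μ (ball q.1 r)) (x, y) ∂μ
      ≤ ∫⁻ y, (ball x (2 * r)).indicator (fun _ => g k x ^ p / μ (ball x r)) y ∂μ :=
        lintegral_mono hslice
    _ = g k x ^ p / μ (ball x r) * μ (ball x (2 * r)) :=
      lintegral_indicator_const measurableSet_ball _
    _ ≤ g k x ^ p / μ (ball x r) * (D * μ (ball x r)) := by gcongr; exact hD x r hr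
    _ = D * g k x ^ p := by
      rw [mul_left_comm, ENNReal.div_mul_cancel (hpos x r hr).ne' (hfin x r).ne]

end

theorem rpow_le_of_le_ofReal_rpow_mul_add {s p d : ℝ} {a b c : ℝ≥0∞} (hp : 1 ≤ p) (hd : 0 ≤ d)
    (h : a ≤ ENNReal.ofReal (d ^ s) * (b + c)) :
    a ^ p ≤ ENNReal.ofReal (d ^ (s * p)) * (2 ^ (p - 1) * (b ^ p + c ^ p)) := by
  have hp₀ : 0 < p := zero_lt_one.trans_le hp
  calc a ^ p ≤ (ENNReal.ofReal (d ^ s) * (b + c)) ^ p := by gcongr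
    _ = ENNReal.ofReal (d ^ (s * p)) * (b + c) ^ p := by
      rw [ENNReal.mul_rpow_of_nonneg _ _ hp₀.le, ENNReal.ofReal_rpow_of_nonneg (by positivity)
        hp₀.le, ← Real.rpow_mul hd]
    _ ≤ _ := by gcongr; exact ENNReal.rpow_add_le_mul_rpow_add_rpow _ _ hp

theorem ofReal_abs_sub_rpow_div_le_gradientKernel {s : ℝ} {u : X → ℝ} (hD : IsBallDoubling μ D)
    (hpos : ∀ x r, 0 < r → 0 < μ (ball x r)) (hfin : ∀ x r, μ (ball x r) < ∞)
    (hp : 1 ≤ p) {k : ℤ} {x y : X} (hxy : (x, y) ∈ dyadicAnnulus k)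
    (hu : ENNReal.ofReal |u x - u y| ≤ ENNReal.ofReal (dist x y ^ s) * (g k x + g k y)) :
    ENNReal.ofReal |u x - u y| ^ p /
        (ENNReal.ofReal (dist x y ^ (s * p)) * μ (ball x (dist x y)))
      ≤ 2 ^ (p - 1) * (gradientKernel μ p g (x, y) + D * gradientKernel μ p g (y, x)) := by
  set r : ℝ := 2 ^ (-k - 1)
  set d := dist x y
  have hr : 0 < r := by positivity
  have hd : 0 < d := hr.trans_le hxy.1
  have hyx : (y, x) ∈ dyadicAnnulus k := by simpa [dyadicAnnulus, dist_comm] using hxy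
  have hV₀ : μ (ball x d) ≠ 0 := (hpos x d hd).ne'
  have hV : μ (ball x d) ≠ ∞ := (hfin x d).ne
  have hx_term : (μ (ball x d))⁻¹ ≤ (μ (ball x r))⁻¹ :=
    ENNReal.inv_le_inv' (measure_mono (ball_subset_ball hxy.1))
  -- `B(y, r) ⊆ B(y, d) ⊆ B(x, 2d)`, so doubling compares `V(x, y)` with `μ(B(y, r))`.
  have hy_term : (μ (ball x d))⁻¹ ≤ D * (μ (ball y r))⁻¹ := by
    refine inv_le_mul_inv_of_le_mul hV₀ hV (hpos y r hr).ne' (hfin y r).ne ?_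
    calc μ (ball y r) ≤ μ (ball x (2 * d)) := measure_mono fun z hz => by
          rw [mem_ball] at hz ⊢; linarith [dist_triangle z y x, dist_comm y x, hxy.1]
      _ ≤ D * μ (ball x d) := hD x d hd
  have hkernel : ∀ a b : X, (a, b) ∈ dyadicAnnulus k →
      g k a ^ p * (μ (ball a r))⁻¹ ≤ gradientKernel μ p g (a, b) := fun a b hab => by
    rw [← div_eq_mul_inv]
    exact (indicator_of_mem hab (fun q : X × X => g k q.1 ^ p / μ (ball q.1 r))).symm.le.trans
      (ENNReal.le_tsum (f := fun k => (dyadicAnnulus k).indicator _ (a, _)) k)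
  calc ENNReal.ofReal |u x - u y| ^ p / (ENNReal.ofReal (d ^ (s * p)) * μ (ball x d))
      ≤ ENNReal.ofReal (d ^ (s * p)) * (2 ^ (p - 1) * (g k x ^ p + g k y ^ p))
          / (ENNReal.ofReal (d ^ (s * p)) * μ (ball x d)) := by
        gcongr; exact rpow_le_of_le_ofReal_rpow_mul_add hp hd.le hu
    _ = 2 ^ (p - 1) * (g k x ^ p * (μ (ball x d))⁻¹ + g k y ^ p * (μ (ball x d))⁻¹) := by
      rw [ENNReal.mul_div_mul_left _ _ (by positivity) ENNReal.ofReal_ne_top, div_eq_mul_inv]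
      ring
    _ ≤ 2 ^ (p - 1) * (g k x ^ p * (μ (ball x r))⁻¹ + g k y ^ p * (D * (μ (ball y r))⁻¹)) := by
      gcongr
    _ ≤ _ := by
      rw [mul_left_comm (g k y ^ p)]
      gcongr
      exacts [hkernel x y hxy, hkernel y x hyx]

theorem bpNormP_le_of_isFracHajlaszGradient [OpensMeasurableSpace X] [SecondCountableTopology X]
    [SFinite μ] {s : ℝ} {u : X → ℝ} (hD : IsBallDoubling μ D) (hD_top : D ≠ ∞)
    (hpos : ∀ x r, 0 < r → 0 < μ (ball x r)) (hfin : ∀ x r, μ (ball x r) < ∞)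
    (hp : 1 ≤ p) (hg : IsFracHajlaszGradient μ s u g) :
    BPnormP μ s p u ≤ 2 ^ (p - 1) * (1 + D) * D * ∫⁻ x, ∑' k, g k x ^ p ∂μ := by
  obtain ⟨hg_meas, E, hE, hgrad⟩ := hg
  set K := gradientKernel μ p g
  have hK : Measurable K := measurable_gradientKernel hg_meas
  have hpt : ∀ x ∉ E, ∀ y ∉ E, ENNReal.ofReal |u x - u y| ^ p /
      (ENNReal.ofReal (dist x y ^ (s * p)) * μ (ball x (dist x y)))
        ≤ 2 ^ (p - 1) * (K (x, y) + D * K (x, y).swap) := by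
    intro x hx y hy
    rcases eq_or_ne x y with rfl | hxy
    · simp [ENNReal.zero_rpow_of_pos (zero_lt_one.trans_le hp)]
    obtain ⟨k, hk⟩ := exists_mem_dyadicAnnulus hxy
    exact ofReal_abs_sub_rpow_div_le_gradientKernel hD hpos hfin hp hk
      (hgrad k x hx y hy hk.1 hk.2)
  have hae : ∀ᵐ y ∂μ, y ∉ E := measure_eq_zero_iff_ae_notMem.1 hE
  calc BPnormP μ s p u ≤ ∫⁻ x, ∫⁻ y, 2 ^ (p - 1) * (K (x, y) + D * K (x, y).swap) ∂μ ∂μ := by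
        refine lintegral_mono_ae (hae.mono fun x hx => lintegral_mono_ae ?_)
        exact hae.mono fun y hy => hpt x hx y hy
    _ = ∫⁻ q, 2 ^ (p - 1) * (K q + D * K q.swap) ∂μ.prod μ :=
      (lintegral_prod _ (by fun_prop :
        Measurable fun q => 2 ^ (p - 1) * (K q + D * K q.swap)).aemeasurable).symm
    _ = 2 ^ (p - 1) * (1 + D) * ∫⁻ q, K q ∂μ.prod μ := by
      rw [lintegral_const_mul _ (by fun_prop),
        lintegral_add_left hK, lintegral_const_mul _ (by fun_prop), lintegral_prod_swap]
      ring
    _ ≤ 2 ^ (p - 1) * (1 + D) * ∫⁻ x, D * ∑' k, g k x ^ p ∂μ := by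
      rw [lintegral_prod _ hK.aemeasurable]
      gcongr with x
      exact lintegral_gradientKernel_le hD hpos hfin hg_meas x
    _ = _ := by rw [lintegral_const_mul' _ _ hD_top]; ring

theorem le_mul_mnormP {s : ℝ} {u : X → ℝ} {a K : ℝ≥0∞} (hK₀ : K ≠ 0) (hK : K ≠ ∞)
    (h : ∀ g, IsFracHajlaszGradient μ s u g → a ≤ K * ∫⁻ x, ∑' k, g k x ^ p ∂μ) :
    a ≤ K * MnormP μ s p u := by
  simp only [MnormP, ENNReal.mul_iInf_of_ne hK₀ hK]
  exact le_iInf₂ h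

end HajlaszToBesov

section BesovToHajlasz

noncomputable def meanOscillation (μ : Measure X) (p : ℝ) (u : X → ℝ) (R : ℝ) (x : X) : ℝ≥0∞ :=
  (∫⁻ z in ball x R, ENNReal.ofReal |u x - u z| ^ p ∂μ) / μ (ball x R)

noncomputable def dyadicMeanGradient (μ : Measure X) (C : ℝ≥0∞) (s p : ℝ) (u : X → ℝ) (k : ℤ)
    (x : X) : ℝ≥0∞ :=
  (C * ENNReal.ofReal (((2 : ℝ) ^ (-k - 1)) ^ (-(s * p))) *
    meanOscillation μ p u (4 * 2 ^ (-k - 1)) x) ^ p⁻¹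

variable {D : ℝ≥0∞} {s p : ℝ} {u : X → ℝ}

theorem ofReal_abs_sub_rpow_le (hp : 1 ≤ p) (a b c : ℝ) :
    ENNReal.ofReal |a - b| ^ p
      ≤ 2 ^ (p - 1) * (ENNReal.ofReal |a - c| ^ p + ENNReal.ofReal |b - c| ^ p) :=
  calc ENNReal.ofReal |a - b| ^ p ≤ (ENNReal.ofReal |a - c| + ENNReal.ofReal |b - c|) ^ p := by
        gcongr
        rw [← ENNReal.ofReal_add (abs_nonneg _) (abs_nonneg _), abs_sub_comm b c]
        exact ENNReal.ofReal_le_ofReal (abs_sub_le a c b)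
    _ ≤ _ := ENNReal.rpow_add_le_mul_rpow_add_rpow _ _ hp

theorem measurable_meanOscillation [OpensMeasurableSpace X] [SecondCountableTopology X] [SFinite μ]
    (hu : Measurable u) (R : ℝ) : Measurable (meanOscillation μ p u R) :=
  (measurable_setLIntegral_ball (by fun_prop) R).div (measurable_measure_ball R)

theorem ofReal_abs_sub_rpow_le_meanOscillation (hD : IsBallDoubling μ D)
    (hpos : ∀ x r, 0 < r → 0 < μ (ball x r)) (hfin : ∀ x r, μ (ball x r) < ∞)
    (hp : 1 ≤ p) (hu : Measurable u) {x y : X} {r : ℝ} (hr : 0 < r) (hxy : dist x y < 2 * r) :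
    ENNReal.ofReal |u x - u y| ^ p ≤ 2 ^ (p - 1) * D ^ 3 *
      (meanOscillation μ p u (4 * r) x + meanOscillation μ p u (4 * r) y) := by
  set N : X → X → ℝ≥0∞ := fun a b => ENNReal.ofReal |u a - u b| ^ p
  set I : X → ℝ≥0∞ := fun w => ∫⁻ z in ball w (4 * r), N w z ∂μ
  have hN : ∀ w, Measurable (N w) := fun w => by fun_prop
  -- Average `|u(x) - u(y)|^p ≤ 2^(p-1) (|u(x) - u(z)|^p + |u(y) - u(z)|^p)` over `z ∈ B(x, r)`.
  have havg : μ (ball x r) * N x y ≤ 2 ^ (p - 1) * (I x + I y) :=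
    calc μ (ball x r) * N x y = ∫⁻ _ in ball x r, N x y ∂μ := by rw [setLIntegral_const, mul_comm]
      _ ≤ ∫⁻ z in ball x r, 2 ^ (p - 1) * (N x z + N y z) ∂μ :=
        lintegral_mono fun z => ofReal_abs_sub_rpow_le hp _ _ _
      _ = 2 ^ (p - 1) * (∫⁻ z in ball x r, N x z ∂μ + ∫⁻ z in ball x r, N y z ∂μ) := by
        rw [lintegral_const_mul' _ _ (by finiteness), lintegral_add_left (hN x)]
      _ ≤ 2 ^ (p - 1) * (I x + I y) := by
        gcongr <;> refine lintegral_mono_set fun z hz => ?_ <;> rw [mem_ball] at hz ⊢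
        · linarith
        · linarith [dist_triangle z x y]
  have hB : ∀ w, dist w x < 2 * r → (μ (ball x r))⁻¹ ≤ D ^ 3 * (μ (ball w (4 * r)))⁻¹ := by
    intro w hw
    refine inv_le_mul_inv_of_le_mul (hpos x r hr).ne' (hfin x r).ne
      (hpos w _ (by positivity)).ne' (hfin w _).ne ?_
    calc μ (ball w (4 * r)) ≤ μ (ball x (2 ^ 3 * r)) := measure_mono fun z hz => by
          rw [mem_ball] at hz ⊢; linarith [dist_triangle z w x]
      _ ≤ D ^ 3 * μ (ball x r) := measure_ball_two_pow_mul_le hD x hr 3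
  calc N x y = (μ (ball x r))⁻¹ * (μ (ball x r) * N x y) := by
        rw [← mul_assoc, ENNReal.inv_mul_cancel (hpos x r hr).ne' (hfin x r).ne, one_mul]
    _ ≤ (μ (ball x r))⁻¹ * (2 ^ (p - 1) * (I x + I y)) := by gcongr
    _ = 2 ^ (p - 1) * (I x * (μ (ball x r))⁻¹ + I y * (μ (ball x r))⁻¹) := by ring
    _ ≤ 2 ^ (p - 1) * (I x * (D ^ 3 * (μ (ball x (4 * r)))⁻¹)
          + I y * (D ^ 3 * (μ (ball y (4 * r)))⁻¹)) := by
      gcongr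
      · exact hB x (by simpa using hr)
      · exact hB y (by rwa [dist_comm])
    _ = _ := by simp only [meanOscillation, I, N, div_eq_mul_inv]; ring

theorem dyadicMeanGradient_rpow {C : ℝ≥0∞} (hp : p ≠ 0) (k : ℤ) (x : X) :
    dyadicMeanGradient μ C s p u k x ^ p = C * ENNReal.ofReal (((2 : ℝ) ^ (-k - 1)) ^ (-(s * p))) *
      meanOscillation μ p u (4 * 2 ^ (-k - 1)) x :=
  ENNReal.rpow_inv_rpow hp _

theorem isFracHajlaszGradient_dyadicMeanGradient [OpensMeasurableSpace X]
    [SecondCountableTopology X] [SFinite μ] (hD : IsBallDoubling μ D)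
    (hpos : ∀ x r, 0 < r → 0 < μ (ball x r)) (hfin : ∀ x r, μ (ball x r) < ∞)
    (hs : 0 < s) (hp : 1 ≤ p) (hu : Measurable u) :
    IsFracHajlaszGradient μ s u (dyadicMeanGradient μ (2 ^ (p - 1) * D ^ 3) s p u) := by
  have hp₀ : 0 < p := zero_lt_one.trans_le hp
  refine ⟨fun k => ((measurable_meanOscillation hu _).const_mul _).pow_const _, ∅, measure_empty,
    fun k x _ y _ hrd hd2r => ?_⟩
  set g := dyadicMeanGradient μ (2 ^ (p - 1) * D ^ 3) s p u k
  set r : ℝ := 2 ^ (-k - 1)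
  set d := dist x y
  have hr : 0 < r := by positivity
  have hd : 0 < d := hr.trans_le hrd
  have hweight : 1 ≤ ENNReal.ofReal (d ^ (s * p)) * ENNReal.ofReal (r ^ (-(s * p))) := by
    rw [← ENNReal.ofReal_mul (by positivity), Real.rpow_neg hr.le, ← div_eq_mul_inv,
      ENNReal.one_le_ofReal, one_le_div (by positivity)]
    exact Real.rpow_le_rpow hr.le hrd (by positivity)
  rw [← ENNReal.rpow_le_rpow_iff hp₀]
  calc ENNReal.ofReal |u x - u y| ^ p
      ≤ 2 ^ (p - 1) * D ^ 3 * (meanOscillation μ p u (4 * r) x + meanOscillation μ p u (4 * r) y) :=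
        ofReal_abs_sub_rpow_le_meanOscillation hD hpos hfin hp hu hr
          (by rwa [← two_zpow_neg])
    _ ≤ ENNReal.ofReal (d ^ (s * p)) * ENNReal.ofReal (r ^ (-(s * p))) * (2 ^ (p - 1) * D ^ 3 *
          (meanOscillation μ p u (4 * r) x + meanOscillation μ p u (4 * r) y)) :=
        le_mul_of_one_le_left' hweight
    _ = ENNReal.ofReal (d ^ (s * p)) * (g x ^ p + g y ^ p) := by
      simp only [g, dyadicMeanGradient_rpow hp₀.ne']; ring
    _ ≤ ENNReal.ofReal (d ^ (s * p)) * (g x + g y) ^ p := by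
      gcongr; exact ENNReal.add_rpow_le_rpow_add _ _ hp
    _ = (ENNReal.ofReal (d ^ s) * (g x + g y)) ^ p := by
      rw [ENNReal.mul_rpow_of_nonneg _ _ hp₀.le, ENNReal.ofReal_rpow_of_nonneg (by positivity)
        hp₀.le, ← Real.rpow_mul hd.le]

theorem tsum_indicator_two_zpow_rpow_le {c t : ℝ} (hc : 0 < c) (ht : 0 < t) :
    ∑' k : ℤ, {k : ℤ | t < 2 ^ (-k - 1)}.indicator
        (fun k => ENNReal.ofReal (((2 : ℝ) ^ (-k - 1)) ^ (-c))) k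
      ≤ ENNReal.ofReal (t ^ (-c)) * (1 - ENNReal.ofReal (2 ^ (-c)))⁻¹ := by
  set L := Int.log 2 t
  have hmem : ∀ k : ℤ, k ∈ {k : ℤ | t < 2 ^ (-k - 1)} ↔ L < -k - 1 := fun k => by
    simpa using Int.lt_zpow_iff_log_lt (R := ℝ) one_lt_two (x := -k - 1) ht
  -- The terms live on `-k - 1 = L + 1 + i`, `i : ℕ`, and form a geometric series in `i`.
  set e : ℕ → ℤ := fun i => -L - 2 - i
  have he : Function.Injective e := fun i j h => by simp only [e] at h; omega
  have hsupp : Function.support ({k : ℤ | t < 2 ^ (-k - 1)}.indicator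
      fun k => ENNReal.ofReal (((2 : ℝ) ^ (-k - 1)) ^ (-c))) ⊆ range e := fun k hk => by
    have := (hmem k).1 (mem_of_indicator_ne_zero hk)
    exact ⟨(-L - 2 - k).toNat, by simp only [e]; omega⟩
  rw [← he.tsum_eq hsupp, ← ENNReal.tsum_geometric, ← ENNReal.tsum_mul_left]
  refine ENNReal.tsum_le_tsum fun i => ?_
  have hei : -e i - 1 = (L + 1) + i := by simp only [e]; ring
  rw [indicator_of_mem ((hmem _).2 (by omega)), ← ENNReal.ofReal_pow (by positivity),
    ← ENNReal.ofReal_mul (by positivity), hei, zpow_add₀ two_ne_zero, zpow_natCast,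
    Real.mul_rpow (by positivity) (by positivity), ← Real.rpow_pow_comm zero_le_two]
  refine ENNReal.ofReal_le_ofReal (mul_le_mul_of_nonneg_right
    (Real.rpow_le_rpow_of_nonpos ht ?_ (neg_nonpos.2 hc.le)) (by positivity))
  simpa using (Int.lt_zpow_succ_log_self (R := ℝ) one_lt_two t).le

noncomputable def dyadicSumConstant (c : ℝ) : ℝ≥0∞ :=
  ENNReal.ofReal (4 ^ c) * (1 - ENNReal.ofReal (2 ^ (-c)))⁻¹

theorem dyadicSumConstant_ne_top {c : ℝ} (hc : 0 < c) : dyadicSumConstant c ≠ ∞ := by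
  refine ENNReal.mul_ne_top ENNReal.ofReal_ne_top (ENNReal.inv_ne_top.2 (tsub_pos_of_lt ?_).ne')
  rw [ENNReal.ofReal_lt_one]
  exact Real.rpow_lt_one_of_one_lt_of_neg one_lt_two (neg_neg_of_pos hc)

theorem tsum_indicator_ball_le {c : ℝ} (hc : 0 < c) {x z : X} (hxz : x ≠ z) :
    ∑' k : ℤ, (ball x (4 * 2 ^ (-k - 1))).indicator (fun _ =>
        ENNReal.ofReal (((2 : ℝ) ^ (-k - 1)) ^ (-c)) * (μ (ball x (4 * 2 ^ (-k - 1))))⁻¹) z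
      ≤ dyadicSumConstant c * (ENNReal.ofReal (dist x z ^ c) * μ (ball x (dist x z)))⁻¹ := by
  set d := dist x z
  have hd : 0 < d := dist_pos.2 hxz
  set w : ℤ → ℝ≥0∞ := fun k => ENNReal.ofReal (((2 : ℝ) ^ (-k - 1)) ^ (-c))
  have hk : ∀ k, (ball x (4 * 2 ^ (-k - 1))).indicator
      (fun _ => w k * (μ (ball x (4 * 2 ^ (-k - 1))))⁻¹) z
        ≤ {k : ℤ | d / 4 < 2 ^ (-k - 1)}.indicator w k * (μ (ball x d))⁻¹ := by
    intro k
    by_cases hz : z ∈ ball x (4 * 2 ^ (-k - 1))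
    · have hdR : d < 4 * 2 ^ (-k - 1) := mem_ball'.1 hz
      rw [indicator_of_mem hz, indicator_of_mem (show k ∈ {k : ℤ | d / 4 < 2 ^ (-k - 1)} from
        show d / 4 < 2 ^ (-k - 1) by linarith)]
      gcongr
    · rw [indicator_of_notMem hz]; exact zero_le
  have hconv :
      ENNReal.ofReal ((d / 4) ^ (-c)) = ENNReal.ofReal (4 ^ c) * (ENNReal.ofReal (d ^ c))⁻¹ := by
    rw [← ENNReal.ofReal_inv_of_pos (by positivity), ← ENNReal.ofReal_mul (by positivity),
      Real.rpow_neg (by positivity), Real.div_rpow hd.le zero_le_four, inv_div, div_eq_mul_inv]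
  calc _ ≤ ∑' k, {k : ℤ | d / 4 < 2 ^ (-k - 1)}.indicator w k * (μ (ball x d))⁻¹ :=
        ENNReal.tsum_le_tsum hk
    _ = (∑' k, {k : ℤ | d / 4 < 2 ^ (-k - 1)}.indicator w k) * (μ (ball x d))⁻¹ :=
        ENNReal.tsum_mul_right
    _ ≤ ENNReal.ofReal ((d / 4) ^ (-c)) * (1 - ENNReal.ofReal (2 ^ (-c)))⁻¹ *
          (μ (ball x d))⁻¹ := by
        gcongr; exact tsum_indicator_two_zpow_rpow_le hc (by positivity)
    _ = _ := by
        rw [dyadicSumConstant, hconv, ENNReal.mul_inv (Or.inl (by positivity))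
          (Or.inl ENNReal.ofReal_ne_top)]
        ring

theorem tsum_mul_meanOscillation_le [OpensMeasurableSpace X]
    (hpos : ∀ x r, 0 < r → 0 < μ (ball x r)) (hs : 0 < s) (hp : 1 ≤ p) (hu : Measurable u)
    (x : X) :
    ∑' k : ℤ, ENNReal.ofReal (((2 : ℝ) ^ (-k - 1)) ^ (-(s * p))) *
        meanOscillation μ p u (4 * 2 ^ (-k - 1)) x
      ≤ dyadicSumConstant (s * p) *
        ∫⁻ z, ENNReal.ofReal |u x - u z| ^ p /
          (ENNReal.ofReal (dist x z ^ (s * p)) * μ (ball x (dist x z))) ∂μ := by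
  have hp₀ : 0 < p := zero_lt_one.trans_le hp
  set c := s * p
  set w : ℤ → ℝ≥0∞ := fun k => ENNReal.ofReal (((2 : ℝ) ^ (-k - 1)) ^ (-c))
  set R : ℤ → ℝ := fun k => 4 * 2 ^ (-k - 1)
  set N : X → ℝ≥0∞ := fun z => ENNReal.ofReal |u x - u z| ^ p
  have hN : Measurable N := by fun_prop
  have hterm : ∀ k, w k * meanOscillation μ p u (R k) x
      = ∫⁻ z, (ball x (R k)).indicator (fun _ => w k * (μ (ball x (R k)))⁻¹) z * N z ∂μ := by
    intro k
    simp_rw [← indicator_mul_left]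
    rw [lintegral_indicator measurableSet_ball, lintegral_const_mul' _ _ (ENNReal.mul_ne_top
      ENNReal.ofReal_ne_top (ENNReal.inv_ne_top.2 (hpos x _ (by positivity)).ne')),
      meanOscillation, div_eq_mul_inv]
    ring
  have hmeas : ∀ k, AEMeasurable (fun z =>
      (ball x (R k)).indicator (fun _ => w k * (μ (ball x (R k)))⁻¹) z * N z) μ :=
    fun k => ((measurable_const.indicator measurableSet_ball).mul hN).aemeasurable
  rw [tsum_congr hterm, ← lintegral_tsum hmeas,
    ← lintegral_const_mul' _ _ (dyadicSumConstant_ne_top (mul_pos hs hp₀))]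
  refine lintegral_mono fun z => ?_
  rcases eq_or_ne x z with rfl | hxz
  · simp [N, ENNReal.zero_rpow_of_pos hp₀]
  rw [ENNReal.tsum_mul_right, div_eq_mul_inv, mul_left_comm, mul_comm (N z)]
  gcongr
  exact tsum_indicator_ball_le (mul_pos hs hp₀) hxz

theorem lintegral_tsum_dyadicMeanGradient_rpow_le [OpensMeasurableSpace X] {C : ℝ≥0∞} (hC : C ≠ ∞)
    (hpos : ∀ x r, 0 < r → 0 < μ (ball x r))
    (hs : 0 < s) (hp : 1 ≤ p) (hu : Measurable u) :
    ∫⁻ x, ∑' k, dyadicMeanGradient μ C s p u k x ^ p ∂μ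
      ≤ C * dyadicSumConstant (s * p) *
        BPnormP μ s p u := by
  have hp₀ : 0 < p := zero_lt_one.trans_le hp
  simp_rw [dyadicMeanGradient_rpow hp₀.ne', mul_assoc C, ENNReal.tsum_mul_left]
  rw [BPnormP, ← lintegral_const_mul' _ _ (dyadicSumConstant_ne_top (mul_pos hs hp₀)),
    ← lintegral_const_mul' _ _ hC]
  gcongr with x
  exact tsum_mul_meanOscillation_le hpos hs hp hu x

theorem mnormP_le_mul_bpNormP [OpensMeasurableSpace X] [SecondCountableTopology X] [SFinite μ]
    (hD : IsBallDoubling μ D) (hD_top : D ≠ ∞)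
    (hpos : ∀ x r, 0 < r → 0 < μ (ball x r)) (hfin : ∀ x r, μ (ball x r) < ∞)
    (hs : 0 < s) (hp : 1 ≤ p) (hu : Measurable u) :
    MnormP μ s p u ≤ 2 ^ (p - 1) * D ^ 3 *
      dyadicSumConstant (s * p) * BPnormP μ s p u :=
  (iInf₂_le _ (isFracHajlaszGradient_dyadicMeanGradient hD hpos hfin hs hp hu)).trans
    (lintegral_tsum_dyadicMeanGradient_rpow_le (by finiteness) hpos hs hp hu)

end BesovToHajlasz

end BourdonPajot

open BourdonPajot Metric in
theorem bourdonPajot_eq_hajlaszBesov_general {X : Type*} [MetricSpace X] [MeasurableSpace X]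
    [BorelSpace X] (μ : Measure X) (C₁ C₂ : ℝ≥0∞) (κ n : ℝ)
    (hC₂1 : 1 ≤ C₂) (hC₂ : C₂ ≠ ∞)
    (hκ0 : 0 < κ) (hκn : κ ≤ n)
    (hRD : ∀ (x : X) (r lam : ℝ), 0 < r →
      ENNReal.ofReal r < 2 * EMetric.diam (Set.univ : Set X) → 1 ≤ lam →
      ENNReal.ofReal (lam * r) < 2 * EMetric.diam (Set.univ : Set X) →
      C₁ * ENNReal.ofReal (lam ^ κ) * μ (Metric.ball x r) ≤ μ (Metric.ball x (lam * r)) ∧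
      μ (Metric.ball x (lam * r)) ≤ C₂ * ENNReal.ofReal (lam ^ n) * μ (Metric.ball x r))
    (hμ : ∀ (x : X) (r : ℝ), 0 < r → 0 < μ (Metric.ball x r) ∧ μ (Metric.ball x r) < ∞)
    (s p : ℝ) (hs : 0 < s) (hp : 1 ≤ p) :
    ∃ C : ℝ≥0∞, 0 < C ∧ C ≠ ∞ ∧ ∀ u : X → ℝ, Measurable u →
      MnormP μ s p u ≤ C * BPnormP μ s p u ∧ BPnormP μ s p u ≤ C * MnormP μ s p u := by
  set D := C₂ * ENNReal.ofReal (2 ^ n)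
  have hD : IsBallDoubling μ D := isBallDoubling_of_doubling_lt_two_mul_ediam hC₂1
    (hκ0.le.trans hκn) fun x r lam h₁ h₂ h₃ h₄ => (hRD x r lam h₁ h₂ h₃ h₄).2
  have hD_top : D ≠ ∞ := ENNReal.mul_ne_top hC₂ ENNReal.ofReal_ne_top
  have hpos : ∀ x r, 0 < r → 0 < μ (ball x r) := fun x r hr => (hμ x r hr).1
  have hfin : ∀ x r, μ (ball x r) < ∞ := fun x r =>
    (le_or_gt r 0).elim (fun hr => by simp [ball_eq_empty.2 hr]) fun hr => (hμ x r hr).2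
  have := sigmaFinite_of_measure_ball_lt_top hfin
  have := secondCountableTopology_of_measure_ball_pos hpos
  set K₁ : ℝ≥0∞ := 2 ^ (p - 1) * (1 + D) * D
  set K₂ : ℝ≥0∞ := 2 ^ (p - 1) * D ^ 3 * dyadicSumConstant (s * p)
  have hK₁₀ : K₁ ≠ 0 := by positivity
  have hK₁ : K₁ ≠ ∞ := by finiteness
  have hK₂ : K₂ ≠ ∞ := ENNReal.mul_ne_top (by finiteness)
    (dyadicSumConstant_ne_top (mul_pos hs (zero_lt_one.trans_le hp)))
  refine ⟨max K₁ K₂, lt_max_of_lt_left (pos_iff_ne_zero.2 hK₁₀), max_ne_top hK₁ hK₂,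
    fun u hu => ⟨?_, ?_⟩⟩
  · calc MnormP μ s p u ≤ K₂ * BPnormP μ s p u :=
          mnormP_le_mul_bpNormP hD hD_top hpos hfin hs hp hu
      _ ≤ _ := by gcongr; exact le_max_right _ _
  · calc BPnormP μ s p u ≤ K₁ * MnormP μ s p u := le_mul_mnormP hK₁₀ hK₁ fun g hg =>
          bpNormP_le_of_isFracHajlaszGradient hD hD_top hpos hfin hp hg
      _ ≤ _ := by gcongr; exact le_max_left _ _

/-- Proposition 4.1: on an RD-space, `Ḃ^s_p(X) = Ṁ^s_{p,p}(X)` with equivalent norms,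
for `s ∈ (0,∞)` and `p ∈ [1,∞)`. -/
theorem bourdonPajot_eq_hajlaszBesov {X : Type*} [MetricSpace X] [MeasurableSpace X]
    [BorelSpace X] (μ : Measure X) (C₁ C₂ : ℝ≥0∞) (κ n : ℝ)
    (hC₁0 : 0 < C₁) (hC₁1 : C₁ ≤ 1) (hC₂1 : 1 ≤ C₂) (hC₂ : C₂ ≠ ∞)
    (hκ0 : 0 < κ) (hκn : κ ≤ n)
    (hRD : ∀ (x : X) (r lam : ℝ), 0 < r →
      ENNReal.ofReal r < 2 * EMetric.diam (Set.univ : Set X) → 1 ≤ lam →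
      ENNReal.ofReal (lam * r) < 2 * EMetric.diam (Set.univ : Set X) →
      C₁ * ENNReal.ofReal (lam ^ κ) * μ (Metric.ball x r) ≤ μ (Metric.ball x (lam * r)) ∧
      μ (Metric.ball x (lam * r)) ≤ C₂ * ENNReal.ofReal (lam ^ n) * μ (Metric.ball x r))
    (hμ : ∀ (x : X) (r : ℝ), 0 < r → 0 < μ (Metric.ball x r) ∧ μ (Metric.ball x r) < ∞)
    (s p : ℝ) (hs : 0 < s) (hp : 1 ≤ p) :
    ∃ C : ℝ≥0∞, 0 < C ∧ C ≠ ∞ ∧ ∀ u : X → ℝ, Measurable u →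
      MnormP μ s p u ≤ C * BPnormP μ s p u ∧ BPnormP μ s p u ≤ C * MnormP μ s p u :=
  bourdonPajot_eq_hajlaszBesov_general μ C₁ C₂ κ n hC₂1 hC₂ hκ0 hκn hRD hμ s p hs hp
end

section
/- If u ∈ Ṁ^{s,p}(X) on an Ahlfors n-regular metric measure space with 0 < s < n and p = n/s, then outside a set of Hausdorff dimension zero, the limit ũ(x) = lim_{r→0} ⨍_{B(x,r)} u(z) dμ(z) exists (Lebesgue point theorem for Hajłasz–Sobolev functions). -/
/-!
Let `p = n / s` and `ν = g ^ p • μ`, a finite measure. A Vitali covering argument shows that the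
points `x` with `ν (B(x, r)) > r ^ (t / 2)` for arbitrarily small `r` form a set of finite
`ℋ^(t/2)`-measure, hence of `ℋ^t`-measure zero. At any other point, Hölder's inequality and the
lower Ahlfors bound give `r ^ s ⨍_{B(x,r)} g ≲ r ^ (t / 2p)`. Averaging the Hajłasz inequality
over `B(x, ρ) × B(x, r)` bounds the difference of the averages of `u` by `(2r) ^ s` times the
averages of `g`, so it is `O(r ^ (t / 2p))` when `ρ ≤ r ≤ 2ρ`; summing over dyadic scales shows
that the averages are Cauchy as `r → 0`.
-/

open MeasureTheory ENNReal

/-- `g` is an `s`-gradient of `u` (Hajłasz). -/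
def IsHajlaszGradient {X : Type*} [MetricSpace X] [MeasurableSpace X]
    (μ : Measure X) (s : ℝ) (u : X → ℝ) (g : X → ℝ≥0∞) : Prop :=
  Measurable g ∧
  ∃ E : Set X, μ E = 0 ∧ ∀ x ∉ E, ∀ y ∉ E,
    ENNReal.ofReal |u x - u y| ≤ ENNReal.ofReal (dist x y ^ s) * (g x + g y)

open Filter Set Metric Topology ProbabilityTheory

theorem abs_sub_le_of_abs_sub_le_of_le_two_mul {A : ℝ → ℝ} {C e δ : ℝ} (hC : 0 ≤ C)
    (he : 0 < e) (h : ∀ ρ r, 0 < ρ → ρ ≤ r → r ≤ 2 * ρ → r < δ → |A ρ - A r| ≤ C * r ^ e)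
    {ρ r : ℝ} (hρ : 0 < ρ) (hρr : ρ ≤ r) (hrδ : r < δ) :
    |A ρ - A r| ≤ C / (1 - 2⁻¹ ^ e) * r ^ e := by
  -- `K` sums the geometric series `∑ₖ C 2^(-k e)` over the dyadic scales between `ρ` and `r`.
  set K := C / (1 - 2⁻¹ ^ e)
  have ha : (2⁻¹ : ℝ) ^ e < 1 := Real.rpow_lt_one (by norm_num) (by norm_num) he
  have hCK : C ≤ K :=
    le_div_self hC (sub_pos.2 ha) (by linarith [Real.rpow_nonneg (by norm_num : (0 : ℝ) ≤ 2⁻¹) e])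
  have hK : K * 2⁻¹ ^ e + C = K := by
    simp only [K]
    field_simp [(sub_pos.2 ha).ne']
    ring
  obtain ⟨k, hk⟩ := pow_unbounded_of_one_lt (r / ρ) one_lt_two
  induction k generalizing r with
  | zero =>
    rw [pow_zero, div_lt_one hρ] at hk
    linarith
  | succ k ih =>
    have hr0 : 0 < r := hρ.trans_le hρr
    by_cases hr2 : r ≤ 2 * ρ
    · exact (h ρ r hρ hρr hr2 hrδ).trans
        (mul_le_mul_of_nonneg_right hCK (Real.rpow_nonneg hr0.le e))
    have hhalf : |A ρ - A (r / 2)| ≤ K * (r / 2) ^ e :=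
      ih (by linarith) (by linarith) (by
        rw [div_div, div_lt_iff₀ (by positivity)]
        rw [div_lt_iff₀ hρ, pow_succ] at hk
        linarith)
    calc |A ρ - A r| ≤ |A ρ - A (r / 2)| + |A (r / 2) - A r| := abs_sub_le _ _ _
      _ ≤ K * (r / 2) ^ e + C * r ^ e :=
          add_le_add hhalf (h _ _ (by linarith) (by linarith) (by linarith) hrδ)
      _ = (K * 2⁻¹ ^ e + C) * r ^ e := by
          rw [div_eq_mul_inv, Real.mul_rpow hr0.le (by norm_num)]
          ring
      _ = K * r ^ e := by rw [hK]

theorem exists_tendsto_nhdsGT_zero_of_abs_sub_le {A : ℝ → ℝ} {K e δ : ℝ} (he : 0 < e)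
    (hδ : 0 < δ) (h : ∀ ρ r, 0 < ρ → ρ ≤ r → r < δ → |A ρ - A r| ≤ K * r ^ e) :
    ∃ L, Tendsto A (𝓝[>] 0) (𝓝 L) := by
  refine cauchy_map_iff_exists_tendsto.1 (cauchy_map_iff.2 ⟨inferInstance, ?_⟩)
  rw [tendsto_uniformity_iff_dist_tendsto_zero]
  have hpow : Tendsto (fun r : ℝ => r ^ e) (𝓝[>] 0) (𝓝 0) := by
    simpa [Real.zero_rpow he.ne'] using
      (Real.continuousAt_rpow_const 0 e (Or.inr he.le)).tendsto.mono_left nhdsWithin_le_nhds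
  have hbound : Tendsto (fun p : ℝ × ℝ => K * p.1 ^ e + K * p.2 ^ e)
      (𝓝[>] 0 ×ˢ 𝓝[>] 0) (𝓝 0) := by
    simpa using ((hpow.comp tendsto_fst).const_mul K).add ((hpow.comp tendsto_snd).const_mul K)
  refine squeeze_zero' (Eventually.of_forall fun _ => dist_nonneg) ?_ hbound
  filter_upwards [prod_mem_prod (Ioo_mem_nhdsGT hδ) (Ioo_mem_nhdsGT hδ)] with ⟨ρ, r⟩ ⟨hρ, hr⟩
  have hρ0 := h ρ ρ hρ.1 le_rfl hρ.2
  have hr0 := h r r hr.1 le_rfl hr.2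
  rw [sub_self, abs_zero] at hρ0 hr0
  rcases le_total ρ r with hρr | hrρ
  · linarith [h ρ r hρ.1 hρr hr.2, Real.dist_eq (A ρ) (A r)]
  · linarith [h r ρ hr.1 hrρ hρ.2, dist_comm (A ρ) (A r), Real.dist_eq (A r) (A ρ)]

section Probability

variable {α : Type*} [MeasurableSpace α] {P Q : Measure α} {u : α → ℝ} {g : α → ℝ≥0∞}
  {K : ℝ≥0∞}

theorem integrable_of_ae_ae_enorm_sub_le [IsFiniteMeasure P] (hK : K ≠ ∞)
    (hu : AEStronglyMeasurable u P) (hg : Measurable g) (hgP : ∫⁻ w, g w ∂P ≠ ∞)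
    (h : ∀ᵐ w ∂P, ∀ᵐ z ∂P, ‖u w - u z‖ₑ ≤ K * (g w + g z)) : Integrable u P := by
  rcases eq_zero_or_neZero P with rfl | _
  · exact integrable_zero_measure
  obtain ⟨w, hw, hgw⟩ := (h.and (ae_lt_top hg hgP)).exists
  refine ⟨hu, ?_⟩
  calc ∫⁻ z, ‖u z‖ₑ ∂P ≤ ∫⁻ z, ‖u w‖ₑ + K * (g w + g z) ∂P := by
        refine lintegral_mono_ae (hw.mono fun z hz => ?_)
        calc ‖u z‖ₑ = ‖u w - (u w - u z)‖ₑ := by rw [_root_.sub_sub_cancel]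
          _ ≤ ‖u w‖ₑ + ‖u w - u z‖ₑ := enorm_sub_le
          _ ≤ ‖u w‖ₑ + K * (g w + g z) := by gcongr
    _ < ∞ := by
        rw [lintegral_add_left measurable_const, lintegral_const_mul _ (hg.const_add _),
          lintegral_add_left measurable_const]
        simp only [lintegral_const]
        have := hgw.ne
        finiteness

theorem enorm_integral_sub_integral_le [IsProbabilityMeasure P] [IsProbabilityMeasure Q]
    (huP : Integrable u P) (huQ : Integrable u Q)
    (hg : Measurable g) (h : ∀ᵐ w ∂P, ∀ᵐ z ∂Q, ‖u w - u z‖ₑ ≤ K * (g w + g z)) :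
    ‖∫ w, u w ∂P - ∫ z, u z ∂Q‖ₑ ≤ K * (∫⁻ w, g w ∂P + ∫⁻ z, g z ∂Q) := by
  have hsub : ∀ w, u w - ∫ z, u z ∂Q = ∫ z, (u w - u z) ∂Q := fun w => by
    rw [integral_sub (integrable_const _) huQ, integral_const, probReal_univ, one_smul]
  calc ‖∫ w, u w ∂P - ∫ z, u z ∂Q‖ₑ = ‖∫ w, (u w - ∫ z, u z ∂Q) ∂P‖ₑ := by
        rw [integral_sub huP (integrable_const _), integral_const, probReal_univ, one_smul]
    _ ≤ ∫⁻ w, ‖u w - ∫ z, u z ∂Q‖ₑ ∂P := enorm_integral_le_lintegral_enorm _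
    _ ≤ ∫⁻ w, ∫⁻ z, ‖u w - u z‖ₑ ∂Q ∂P := by
        gcongr with w
        rw [hsub]
        exact enorm_integral_le_lintegral_enorm _
    _ ≤ ∫⁻ w, ∫⁻ z, K * (g w + g z) ∂Q ∂P := lintegral_mono_ae <| h.mono fun w hw =>
        lintegral_mono_ae hw
    _ = ∫⁻ w, K * (g w + ∫⁻ z, g z ∂Q) ∂P := lintegral_congr fun w => by
        rw [lintegral_const_mul _ (hg.const_add _), lintegral_add_left measurable_const,
          lintegral_const, measure_univ, mul_one]
    _ = K * (∫⁻ w, g w ∂P + ∫⁻ z, g z ∂Q) := by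
        rw [lintegral_const_mul _ (hg.add_const _), lintegral_add_right _ measurable_const,
          lintegral_const, measure_univ, mul_one]

end Probability

theorem rpow_measure_mul_setLAverage_le {α : Type*} [MeasurableSpace α] {μ : Measure α}
    {B : Set α} {g : α → ℝ≥0∞} {p : ℝ} (hp : 1 < p) (hB : μ B ≠ ∞)
    (hg : AEMeasurable g (μ.restrict B)) :
    μ B ^ p⁻¹ * ⨍⁻ x in B, g x ∂μ ≤ (∫⁻ x in B, g x ^ p ∂μ) ^ p⁻¹ := by
  rcases eq_or_ne (μ B) 0 with hB0 | hB0
  · simp [Measure.restrict_eq_zero.2 hB0]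
  have hpq : p.HolderConjugate p.conjExponent := .conjExponent hp
  have hHolder := ENNReal.lintegral_mul_le_Lp_mul_Lq (μ.restrict B) hpq hg
    (aemeasurable_const (b := (1 : ℝ≥0∞)))
  simp only [Pi.mul_apply, mul_one, one_rpow, lintegral_const, Measure.restrict_apply_univ,
    one_mul, one_div] at hHolder
  rw [setLAverage_eq]
  calc μ B ^ p⁻¹ * ((∫⁻ x in B, g x ∂μ) / μ B)
      ≤ μ B ^ p⁻¹ * ((∫⁻ x in B, g x ^ p ∂μ) ^ p⁻¹ * μ B ^ p.conjExponent⁻¹ / μ B) := by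
        gcongr
    _ = (∫⁻ x in B, g x ^ p ∂μ) ^ p⁻¹ * (μ B ^ p⁻¹ * μ B ^ p.conjExponent⁻¹ / μ B) := by
        simp only [div_eq_mul_inv]
        ring
    _ = (∫⁻ x in B, g x ^ p ∂μ) ^ p⁻¹ := by
        rw [← ENNReal.rpow_add _ _ hB0 hB, hpq.inv_add_inv_eq_one, rpow_one,
          ENNReal.div_self hB0 hB, mul_one]

theorem rpow_mul_ofReal_rpow_mul_setLAverage_le {α : Type*} [MeasurableSpace α]
    {μ : Measure α} {B : Set α} {g : α → ℝ≥0∞} {c : ℝ≥0∞} {n s r : ℝ} (hs : 0 < s)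
    (hsn : s < n) (hr : 0 ≤ r) (hcB : c * ENNReal.ofReal (r ^ n) ≤ μ B) (hB : μ B ≠ ∞)
    (hg : AEMeasurable g (μ.restrict B)) :
    c ^ (s / n) * ENNReal.ofReal (r ^ s) * ⨍⁻ x in B, g x ∂μ ≤
      (∫⁻ x in B, g x ^ (n / s) ∂μ) ^ (s / n) := by
  have hn : 0 < n := hs.trans hsn
  have hsn0 : 0 ≤ s / n := (div_pos hs hn).le
  calc c ^ (s / n) * ENNReal.ofReal (r ^ s) * ⨍⁻ x in B, g x ∂μ
      = (c * ENNReal.ofReal (r ^ n)) ^ (s / n) * ⨍⁻ x in B, g x ∂μ := by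
        rw [mul_rpow_of_nonneg _ _ hsn0, ENNReal.ofReal_rpow_of_nonneg (by positivity) hsn0,
          ← Real.rpow_mul hr, mul_div_cancel₀ s hn.ne']
    _ ≤ μ B ^ (s / n) * ⨍⁻ x in B, g x ∂μ := by gcongr
    _ ≤ (∫⁻ x in B, g x ^ (n / s) ∂μ) ^ (s / n) := by
        simpa only [inv_div] using
          rpow_measure_mul_setLAverage_le ((one_lt_div hs).2 hsn) hB hg

theorem dist_le_two_mul_of_mem_ball_of_mem_ball {X : Type*} [PseudoMetricSpace X] {x w z : X}
    {ρ r : ℝ} (hw : w ∈ ball x ρ) (hz : z ∈ ball x r) (hρr : ρ ≤ r) : dist w z ≤ 2 * r := by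
  linarith [dist_triangle_right w z x, mem_ball.1 hw, mem_ball.1 hz]

-- Averages over `A` are integrals against the probability measure `μ[|A] = (μ A)⁻¹ • μ.restrict A`.

namespace IsHajlaszGradient

variable {X : Type*} [MetricSpace X] [MeasurableSpace X] {μ : Measure X} {s : ℝ} {u : X → ℝ}
  {g : X → ℝ≥0∞} {A B : Set X} {D : ℝ}

theorem ae_cond_ae_cond_enorm_sub_le (hg : IsHajlaszGradient μ s u g) (hs : 0 ≤ s)
    (hA : MeasurableSet A) (hB : MeasurableSet B) (hD : ∀ w ∈ A, ∀ z ∈ B, dist w z ≤ D) :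
    ∀ᵐ w ∂μ[|A], ∀ᵐ z ∂μ[|B], ‖u w - u z‖ₑ ≤ ENNReal.ofReal (D ^ s) * (g w + g z) := by
  obtain ⟨-, N, hN, hug⟩ := hg
  have hNc : ∀ C : Set X, ∀ᵐ w ∂μ[|C], w ∉ N := fun _ =>
    cond_absolutelyContinuous.ae_le (measure_eq_zero_iff_ae_notMem.1 hN)
  filter_upwards [ae_cond_mem hA, hNc A] with w hwA hwN
  filter_upwards [ae_cond_mem hB, hNc B] with z hzB hzN
  rw [Real.enorm_eq_ofReal_abs]
  refine (hug w hwN z hzN).trans ?_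
  gcongr
  exact hD w hwA z hzB

theorem integrable_cond (hg : IsHajlaszGradient μ s u g) (hs : 0 ≤ s)
    (hu : AEStronglyMeasurable u μ) (hA : MeasurableSet A) (hA0 : μ A ≠ 0) (hAfin : μ A ≠ ∞)
    (hD : ∀ w ∈ A, ∀ z ∈ A, dist w z ≤ D) (hgA : ⨍⁻ w in A, g w ∂μ ≠ ∞) :
    Integrable u μ[|A] :=
  have := cond_isProbabilityMeasure_of_finite hA0 hAfin
  integrable_of_ae_ae_enorm_sub_le ofReal_ne_top (hu.mono_ac cond_absolutelyContinuous) hg.1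
    (by rwa [setLAverage_eq'] at hgA) (hg.ae_cond_ae_cond_enorm_sub_le hs hA hA hD)

theorem enorm_setAverage_sub_setAverage_le (hg : IsHajlaszGradient μ s u g) (hs : 0 ≤ s)
    (hA : MeasurableSet A) (hB : MeasurableSet B) (hA0 : μ A ≠ 0) (hAfin : μ A ≠ ∞)
    (hB0 : μ B ≠ 0) (hBfin : μ B ≠ ∞) (hD : ∀ w ∈ A, ∀ z ∈ B, dist w z ≤ D)
    (huA : Integrable u μ[|A]) (huB : Integrable u μ[|B]) :
    ‖(⨍ w in A, u w ∂μ) - ⨍ z in B, u z ∂μ‖ₑ ≤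
      ENNReal.ofReal (D ^ s) * (⨍⁻ w in A, g w ∂μ + ⨍⁻ z in B, g z ∂μ) := by
  have := cond_isProbabilityMeasure_of_finite hA0 hAfin
  have := cond_isProbabilityMeasure_of_finite hB0 hBfin
  rw [setAverage_eq', setAverage_eq', setLAverage_eq', setLAverage_eq']
  exact enorm_integral_sub_integral_le (P := μ[|A]) (Q := μ[|B]) huA huB hg.1
    (hg.ae_cond_ae_cond_enorm_sub_le hs hA hB hD)

variable [OpensMeasurableSpace X] {x : X}

theorem integrable_cond_ball (hg : IsHajlaszGradient μ s u g) (hs : 0 ≤ s)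
    (hu : AEStronglyMeasurable u μ) {K : ℝ≥0∞} (hK : K ≠ ∞) {r e : ℝ} (hr : 0 < r)
    (h0 : μ (ball x r) ≠ 0) (hfin : μ (ball x r) ≠ ∞)
    (hbound : ENNReal.ofReal (r ^ s) * ⨍⁻ z in ball x r, g z ∂μ ≤ K * ENNReal.ofReal (r ^ e)) :
    Integrable u μ[|ball x r] := by
  refine hg.integrable_cond hs hu measurableSet_ball h0 hfin
    (fun w hw z hz => dist_le_two_mul_of_mem_ball_of_mem_ball hw hz le_rfl) fun htop => ?_
  have hpos : ENNReal.ofReal (r ^ s) ≠ 0 := by simp [Real.rpow_pos_of_pos hr]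
  exact (hbound.trans_lt (by finiteness)).ne (mul_eq_top.2 (Or.inl ⟨hpos, htop⟩))

theorem abs_setAverage_ball_sub_setAverage_ball_le (hg : IsHajlaszGradient μ s u g)
    (hs : 0 ≤ s) (hu : AEStronglyMeasurable u μ) {K : ℝ≥0∞} (hK : K ≠ ∞) {ρ r e : ℝ}
    (hρ : 0 < ρ) (hρr : ρ ≤ r) (hr2 : r ≤ 2 * ρ) (he : 0 ≤ e)
    (hρ0 : μ (ball x ρ) ≠ 0) (hρfin : μ (ball x ρ) ≠ ∞)
    (hρbound : ENNReal.ofReal (ρ ^ s) * ⨍⁻ z in ball x ρ, g z ∂μ ≤ K * ENNReal.ofReal (ρ ^ e))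
    (hr0 : μ (ball x r) ≠ 0) (hrfin : μ (ball x r) ≠ ∞)
    (hrbound : ENNReal.ofReal (r ^ s) * ⨍⁻ z in ball x r, g z ∂μ ≤ K * ENNReal.ofReal (r ^ e)) :
    |⨍ z in ball x ρ, u z ∂μ - ⨍ z in ball x r, u z ∂μ| ≤ (4 ^ s + 2 ^ s) * K.toReal * r ^ e := by
  have hr : 0 < r := hρ.trans_le hρr
  rw [← ENNReal.ofReal_le_ofReal_iff (by positivity), ← Real.enorm_eq_ofReal_abs]
  refine (hg.enorm_setAverage_sub_setAverage_le hs measurableSet_ball measurableSet_ball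
    hρ0 hρfin hr0 hrfin (fun w hw z hz => dist_le_two_mul_of_mem_ball_of_mem_ball hw hz hρr)
    (hg.integrable_cond_ball hs hu hK hρ hρ0 hρfin hρbound)
    (hg.integrable_cond_ball hs hu hK hr hr0 hrfin hrbound)).trans ?_
  calc ENNReal.ofReal ((2 * r) ^ s) * (⨍⁻ z in ball x ρ, g z ∂μ + ⨍⁻ z in ball x r, g z ∂μ)
      ≤ ENNReal.ofReal ((4 * ρ) ^ s) * ⨍⁻ z in ball x ρ, g z ∂μ +
        ENNReal.ofReal ((2 * r) ^ s) * ⨍⁻ z in ball x r, g z ∂μ := by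
        rw [mul_add]
        gcongr ENNReal.ofReal ?_ * _ + _
        exact Real.rpow_le_rpow (by positivity) (by linarith) hs
    _ = ENNReal.ofReal (4 ^ s) * (ENNReal.ofReal (ρ ^ s) * ⨍⁻ z in ball x ρ, g z ∂μ) +
        ENNReal.ofReal (2 ^ s) * (ENNReal.ofReal (r ^ s) * ⨍⁻ z in ball x r, g z ∂μ) := by
        rw [Real.mul_rpow (by norm_num) hρ.le, Real.mul_rpow (by norm_num) hr.le,
          ENNReal.ofReal_mul (by positivity), ENNReal.ofReal_mul (by positivity), mul_assoc,
          mul_assoc]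
    _ ≤ ENNReal.ofReal (4 ^ s) * (K * ENNReal.ofReal (r ^ e)) +
        ENNReal.ofReal (2 ^ s) * (K * ENNReal.ofReal (r ^ e)) := by
        gcongr _ * ?_ + _ * ?_
        exact hρbound.trans (by gcongr)
    _ = ENNReal.ofReal ((4 ^ s + 2 ^ s) * K.toReal * r ^ e) := by
        rw [ENNReal.ofReal_mul (by positivity), ENNReal.ofReal_mul (by positivity),
          ofReal_toReal hK, ENNReal.ofReal_add (by positivity) (by positivity)]
        ring

theorem exists_tendsto_setAverage_ball (hg : IsHajlaszGradient μ s u g) (hs : 0 ≤ s)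
    (hu : AEStronglyMeasurable u μ) {K : ℝ≥0∞} (hK : K ≠ ∞) {e : ℝ} (he : 0 < e)
    (hball : ∀ᶠ r in 𝓝[>] 0, μ (ball x r) ≠ 0 ∧ μ (ball x r) ≠ ∞ ∧
      ENNReal.ofReal (r ^ s) * ⨍⁻ z in ball x r, g z ∂μ ≤ K * ENNReal.ofReal (r ^ e)) :
    ∃ L, Tendsto (fun r => ⨍ z in ball x r, u z ∂μ) (𝓝[>] 0) (𝓝 L) := by
  obtain ⟨δ, hδ, hδball⟩ := (nhdsGT_basis (0 : ℝ)).eventually_iff.1 hball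
  refine exists_tendsto_nhdsGT_zero_of_abs_sub_le he hδ fun ρ r hρ hρr hrδ =>
    abs_sub_le_of_abs_sub_le_of_le_two_mul (A := fun r => ⨍ z in ball x r, u z ∂μ)
      (C := (4 ^ s + 2 ^ s) * K.toReal) (by positivity) he (fun ρ r hρ hρr hr2 hrδ => ?_) hρ hρr hrδ
  obtain ⟨hρ0, hρfin, hρbound⟩ := hδball ⟨hρ, hρr.trans_lt hrδ⟩
  obtain ⟨hr0, hrfin, hrbound⟩ := hδball ⟨hρ.trans_le hρr, hrδ⟩
  exact hg.abs_setAverage_ball_sub_setAverage_ball_le hs hu hK hρ hρr hr2 he.le hρ0 hρfin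
    hρbound hr0 hrfin hrbound

theorem exists_tendsto_setAverage_ball_of_lintegral_rpow_le (hg : IsHajlaszGradient μ s u g)
    (hu : AEStronglyMeasurable u μ) {n : ℝ} (hs : 0 < s) (hsn : s < n) {c : ℝ≥0∞} (hc : c ≠ 0)
    {ε : ℝ} (hε : 0 < ε)
    (hlower : ∀ᶠ r in 𝓝[>] 0, c * ENNReal.ofReal (r ^ n) ≤ μ (ball x r))
    (hupper : ∀ᶠ r in 𝓝[>] 0, μ (ball x r) ≠ ∞)
    (hdecay : ∀ᶠ r in 𝓝[>] 0, ∫⁻ z in ball x r, g z ^ (n / s) ∂μ ≤ ENNReal.ofReal (r ^ ε)) :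
    ∃ L, Tendsto (fun r => ⨍ z in ball x r, u z ∂μ) (𝓝[>] 0) (𝓝 L) := by
  have hsn0 : 0 < s / n := div_pos hs (hs.trans hsn)
  have hcs : c ^ (s / n) ≠ 0 := by
    rw [Ne, ENNReal.rpow_eq_zero_iff]
    rintro (⟨h, -⟩ | ⟨-, h⟩)
    exacts [hc h, lt_asymm hsn0 h]
  refine hg.exists_tendsto_setAverage_ball hs.le hu (ENNReal.inv_ne_top.2 hcs)
    (mul_pos hε hsn0) ?_
  filter_upwards [hlower, hupper, hdecay, self_mem_nhdsWithin] with r hrl hru hrd hr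
  have hr : 0 < r := hr
  have hpos : c * ENNReal.ofReal (r ^ n) ≠ 0 :=
    mul_ne_zero hc (by simp [Real.rpow_pos_of_pos hr])
  refine ⟨(pos_iff_ne_zero.2 hpos).trans_le hrl |>.ne', hru, ?_⟩
  rw [← ENNReal.div_eq_inv_mul, ENNReal.le_div_iff_mul_le (Or.inl hcs) (Or.inr ofReal_ne_top),
    mul_comm, ← mul_assoc]
  calc c ^ (s / n) * ENNReal.ofReal (r ^ s) * ⨍⁻ z in ball x r, g z ∂μ
      ≤ (∫⁻ z in ball x r, g z ^ (n / s) ∂μ) ^ (s / n) :=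
        rpow_mul_ofReal_rpow_mul_setLAverage_le hs hsn hr.le hrl hru hg.1.aemeasurable
    _ ≤ ENNReal.ofReal (r ^ ε) ^ (s / n) := by gcongr
    _ = ENNReal.ofReal (r ^ (ε * (s / n))) := by
        rw [ENNReal.ofReal_rpow_of_nonneg (by positivity) hsn0.le, ← Real.rpow_mul hr.le]

end IsHajlaszGradient

theorem ediam_closedBall_le_ofReal {X : Type*} [PseudoMetricSpace X] (x : X) (r : ℝ) :
    ediam (closedBall x r) ≤ ENNReal.ofReal (2 * r) :=
  ediam_le_of_forall_dist_le fun p hp q hq => by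
    linarith [dist_triangle_right p q x, mem_closedBall.1 hp, mem_closedBall.1 hq]

theorem Set.PairwiseDisjoint.countable_of_measure_pos {α ι : Type*} [MeasurableSpace α]
    {μ : Measure α} [SFinite μ] {c : Set ι} {f : ι → Set α} (hdisj : c.PairwiseDisjoint f)
    (hmeas : ∀ i ∈ c, MeasurableSet (f i)) (hpos : ∀ i ∈ c, 0 < μ (f i)) : c.Countable := by
  refine Set.countable_coe_iff.1 (Set.countable_univ_iff.1 ?_)
  exact (Measure.countable_meas_pos_of_disjoint_iUnion (μ := μ) (As := fun i : c => f i)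
    (fun i => hmeas i i.2) fun i j hij => hdisj i.2 j.2 (Subtype.coe_ne_coe.2 hij)).mono
    fun i _ => hpos i i.2

theorem exists_countable_closedBall_cover_tsum_ediam_rpow_le {X : Type*} [PseudoMetricSpace X]
    [MeasurableSpace X] [OpensMeasurableSpace X] (ν : Measure X) [SFinite ν] {d : ℝ} (hd : 0 ≤ d)
    {F : Set X} {δ : ℝ}
    (hF : ∀ x ∈ F, ∃ r ∈ Ioo 0 δ, ENNReal.ofReal (r ^ d) < ν (closedBall x r)) :
    ∃ (c : Set X) (rad : X → ℝ), c.Countable ∧ (∀ b ∈ c, 0 < rad b ∧ rad b < δ) ∧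
      F ⊆ ⋃ b ∈ c, closedBall b (4 * rad b) ∧
      ∑' b : c, ediam (closedBall (b : X) (4 * rad b)) ^ d ≤ ENNReal.ofReal (8 ^ d) * ν univ := by
  choose! rad hrad hlt using hF
  obtain ⟨c, hcF, hdisj, hcov⟩ :=
    Vitali.exists_disjoint_subfamily_covering_enlargement_closedBall F id rad δ
      (fun x hx => (hrad x hx).2.le) 4 (by norm_num)
  have hc : c.Countable := hdisj.countable_of_measure_pos (μ := ν)
    (fun _ _ => measurableSet_closedBall) fun b hb => (hlt b (hcF hb)).trans_le' zero_le
  refine ⟨c, rad, hc, fun b hb => hrad b (hcF hb), fun x hx => ?_, ?_⟩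
  · obtain ⟨b, hb, hxb⟩ := hcov x hx
    exact mem_biUnion hb (hxb (mem_closedBall_self (hrad x hx).1.le))
  calc ∑' b : c, ediam (closedBall (b : X) (4 * rad b)) ^ d
      ≤ ∑' b : c, ENNReal.ofReal (8 ^ d) * ν (closedBall (b : X) (rad b)) := by
        refine ENNReal.tsum_le_tsum fun b => ?_
        obtain ⟨hb, -⟩ := hrad b (hcF b.2)
        calc ediam (closedBall (b : X) (4 * rad b)) ^ d
            ≤ ENNReal.ofReal (2 * (4 * rad b)) ^ d := by
              gcongr
              exact ediam_closedBall_le_ofReal _ _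
          _ = ENNReal.ofReal (8 ^ d) * ENNReal.ofReal (rad b ^ d) := by
              rw [ENNReal.ofReal_rpow_of_nonneg (by positivity) hd,
                ← ENNReal.ofReal_mul (by positivity), ← Real.mul_rpow (by norm_num) hb.le]
              ring_nf
          _ ≤ _ := by gcongr; exact (hlt b (hcF b.2)).le
    _ = ENNReal.ofReal (8 ^ d) * ∑' b : c, ν (closedBall (b : X) (rad b)) := ENNReal.tsum_mul_left
    _ ≤ ENNReal.ofReal (8 ^ d) * ν univ := by
        gcongr
        exact (measure_biUnion hc hdisj fun _ _ => measurableSet_closedBall).symm.trans_le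
          (measure_mono (subset_univ _))

section Density

variable {X : Type*} [MetricSpace X] [MeasurableSpace X] [BorelSpace X] (ν : Measure X)
  [IsFiniteMeasure ν] {d : ℝ}

theorem hausdorffMeasure_setOf_frequently_lt_measure_closedBall_ne_top (hd : 0 ≤ d) :
    μH[d] {x | ∃ᶠ r in 𝓝[>] 0, ENNReal.ofReal (r ^ d) < ν (closedBall x r)} ≠ ∞ := by
  set F := {x | ∃ᶠ r in 𝓝[>] 0, ENNReal.ofReal (r ^ d) < ν (closedBall x r)}
  have hF : ∀ m : ℕ, ∀ x ∈ F, ∃ r ∈ Ioo 0 (1 / (m + 1) : ℝ),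
      ENNReal.ofReal (r ^ d) < ν (closedBall x r) := fun m x hx =>
    (nhdsGT_basis (0 : ℝ)).frequently_iff.1 hx _ Nat.one_div_pos_of_nat
  choose c rad hc hrad hcov hsum using fun m =>
    exists_countable_closedBall_cover_tsum_ediam_rpow_le ν hd (hF m)
  have : ∀ m, Countable (c m) := fun m => (hc m).to_subtype
  have hle := Measure.hausdorffMeasure_le_liminf_tsum d F
    (fun m : ℕ => ENNReal.ofReal (8 * (1 / (m + 1))))
    (by simpa using (ENNReal.tendsto_ofReal
      ((tendsto_one_div_add_atTop_nhds_zero_nat (𝕜 := ℝ)).const_mul 8)))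
    (fun m (b : c m) => closedBall (b : X) (4 * rad m b))
    (Eventually.of_forall fun m b => (ediam_closedBall_le_ofReal _ _).trans
      (ENNReal.ofReal_le_ofReal (by linarith [(hrad m b b.2).2])))
    (Eventually.of_forall fun m x hx => by
      obtain ⟨b, hb, hxb⟩ := mem_iUnion₂.1 (hcov m hx)
      exact mem_iUnion.2 ⟨⟨b, hb⟩, hxb⟩)
  refine ne_top_of_le_ne_top (b := ENNReal.ofReal (8 ^ d) * ν univ) (by finiteness) ?_
  exact hle.trans (liminf_le_of_frequently_le' (Frequently.of_forall hsum))

theorem hausdorffMeasure_setOf_frequently_lt_measure_closedBall_eq_zero (hd : 0 ≤ d) {t : ℝ}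
    (hdt : d < t) :
    μH[t] {x | ∃ᶠ r in 𝓝[>] 0, ENNReal.ofReal (r ^ d) < ν (closedBall x r)} = 0 :=
  (Measure.hausdorffMeasure_zero_or_top hdt _).resolve_right
    (hausdorffMeasure_setOf_frequently_lt_measure_closedBall_ne_top ν hd)

end Density

theorem tendsto_setAverage_ball_of_subsingleton {X : Type*} [PseudoMetricSpace X]
    [MeasurableSpace X] [Subsingleton X] (μ : Measure X) (u : X → ℝ) (x : X) :
    Tendsto (fun r => ⨍ z in ball x r, u z ∂μ) (𝓝[>] 0) (𝓝 (⨍ z, u z ∂μ)) := by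
  refine tendsto_const_nhds.congr' ?_
  filter_upwards [self_mem_nhdsWithin] with r hr
  rw [(nonempty_ball.2 hr).eq_univ, Measure.restrict_univ]

theorem hajlasz_sobolev_lebesgue_points_general {X : Type*} [MetricSpace X] [MeasurableSpace X]
    [BorelSpace X] (μ : Measure X) (n s : ℝ) (hs : 0 < s) (hsn : s < n)
    (c₁ c₂ : ℝ≥0∞) (hc₁ : 0 < c₁) (hc₂ : c₂ ≠ ∞)
    (hreg : ∀ (x : X) (r : ℝ), 0 < r →
      ENNReal.ofReal r < EMetric.diam (Set.univ : Set X) →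
      c₁ * ENNReal.ofReal (r ^ n) ≤ μ (Metric.ball x r) ∧
      μ (Metric.ball x r) ≤ c₂ * ENNReal.ofReal (r ^ n))
    (u : X → ℝ) (hu : Measurable u) (g : X → ℝ≥0∞)
    (hg : IsHajlaszGradient μ s u g) (hgL : (∫⁻ x, g x ^ (n / s) ∂μ) ≠ ∞) :
    ∃ E : Set X, (∀ t : ℝ, 0 < t → μH[t] E = 0) ∧
      ∀ x ∉ E, ∃ L : ℝ, Filter.Tendsto (fun r => ⨍ z in Metric.ball x r, u z ∂μ)
        (nhdsWithin 0 (Set.Ioi 0)) (nhds L) := by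
  refine ⟨{x | ¬ ∃ L, Tendsto (fun r => ⨍ z in ball x r, u z ∂μ) (𝓝[>] 0) (𝓝 L)},
    fun t ht => ?_, fun x hx => not_not.1 hx⟩
  -- `hreg` says nothing when `X` has diameter zero, but then every ball is all of `X`.
  rcases eq_or_ne (ediam (univ : Set X)) 0 with hdiam | hdiam
  · have : Subsingleton X := subsingleton_univ_iff.1 (ediam_eq_zero_iff.1 hdiam)
    exact measure_mono_null
      (fun x hx => (hx ⟨_, tendsto_setAverage_ball_of_subsingleton μ u x⟩).elim) measure_empty
  obtain ⟨δ, -, hδ, hδdiam⟩ := ENNReal.lt_iff_exists_real_btwn.1 (pos_iff_ne_zero.2 hdiam)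
  set ν := μ.withDensity fun z => g z ^ (n / s)
  have : IsFiniteMeasure ν := isFiniteMeasure_withDensity hgL
  refine measure_mono_null (fun x hx => ?_)
    (hausdorffMeasure_setOf_frequently_lt_measure_closedBall_eq_zero ν (half_pos ht).le
      (half_lt_self ht))
  by_contra hfreq
  have hreg_x : ∀ᶠ r in 𝓝[>] 0, c₁ * ENNReal.ofReal (r ^ n) ≤ μ (ball x r) ∧
      μ (ball x r) ≤ c₂ * ENNReal.ofReal (r ^ n) := by
    filter_upwards [Ioo_mem_nhdsGT (ENNReal.ofReal_pos.1 hδ)] with r hr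
    exact hreg x r hr.1 (((ENNReal.ofReal_lt_ofReal_iff (hr.1.trans hr.2)).2 hr.2).trans hδdiam)
  refine hx (hg.exists_tendsto_setAverage_ball_of_lintegral_rpow_le hu.aestronglyMeasurable hs
    hsn hc₁.ne' (half_pos ht) (hreg_x.mono fun r h => h.1)
    (hreg_x.mono fun r h => (h.2.trans_lt (by finiteness)).ne) ?_)
  filter_upwards [not_frequently.1 hfreq] with r hr
  calc ∫⁻ z in ball x r, g z ^ (n / s) ∂μ ≤ ν (closedBall x r) := by
        rw [withDensity_apply _ measurableSet_closedBall]
        exact lintegral_mono_set ball_subset_closedBall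
    _ ≤ ENNReal.ofReal (r ^ (t / 2)) := not_lt.1 hr

/-- Lemma 5.2: Lebesgue point theorem for Hajłasz–Sobolev functions: if `u ∈ Ṁ^{s,n/s}(X)`
on an Ahlfors `n`-regular space with `0 < s < n`, then outside a set of Hausdorff dimension
zero the limit of averages `lim_{r→0} ⨍_{B(x,r)} u dμ` exists. -/
theorem hajlasz_sobolev_lebesgue_points {X : Type*} [MetricSpace X] [MeasurableSpace X]
    [BorelSpace X] (μ : Measure X) (n s : ℝ) (hn : 0 < n) (hs : 0 < s) (hsn : s < n)
    (c₁ c₂ : ℝ≥0∞) (hc₁ : 0 < c₁) (hc₂ : c₂ ≠ ∞)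
    (hreg : ∀ (x : X) (r : ℝ), 0 < r →
      ENNReal.ofReal r < EMetric.diam (Set.univ : Set X) →
      c₁ * ENNReal.ofReal (r ^ n) ≤ μ (Metric.ball x r) ∧
      μ (Metric.ball x r) ≤ c₂ * ENNReal.ofReal (r ^ n))
    (u : X → ℝ) (hu : Measurable u) (g : X → ℝ≥0∞)
    (hg : IsHajlaszGradient μ s u g) (hgL : (∫⁻ x, g x ^ (n / s) ∂μ) ≠ ∞) :
    ∃ E : Set X, (∀ t : ℝ, 0 < t → μH[t] E = 0) ∧
      ∀ x ∉ E, ∃ L : ℝ, Filter.Tendsto (fun r => ⨍ z in Metric.ball x r, u z ∂μ)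
        (nhdsWithin 0 (Set.Ioi 0)) (nhds L) :=
  hajlasz_sobolev_lebesgue_points_general μ n s hs hsn c₁ c₂ hc₁ hc₂ hreg u hu g hg hgL
end

section
/- Bounded multiplicity of distortion scales: let f : ℝⁿ → ℝⁿ be a quasiconformal (equivalently quasisymmetric) mapping satisfying, for some α ∈ (0,1] and C > 0, |f(E)|/|f(B)| ≤ C (|E|/|B|)^α for all balls B and measurable E ⊂ B, and suppose L_f(x,r)ⁿ ≍ |f(B(x,r))| for all x, r. Then there is N ∈ ℕ, independent of y and k, such that for all y ∈ ℝⁿ and k ∈ ℤ, the set { j ∈ ℤ : L_f(y, 2^{-j}) ∈ [2^{-k-1}, 2^{-k}) } has at most N elements. -/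
open MeasureTheory ENNReal

/-- `L_f(x,r) = sup{ |f(x)−f(y)| : |x−y| ≤ r }`. -/
noncomputable def distortionL {n : ℕ} (f : EuclideanSpace ℝ (Fin n) → EuclideanSpace ℝ (Fin n))
    (x : EuclideanSpace ℝ (Fin n)) (r : ℝ) : ℝ :=
  sSup {t : ℝ | ∃ y, dist x y ≤ r ∧ t = dist (f x) (f y)}

/-!
If `L_f(y, ·)` fails to halve between the radii `2^{-d} r` and `r`, the two-sided comparison
`L_f(y,ρ)ⁿ ≍ |f(B(y,ρ))|` together with the volume distortion bound applied to
`B(y, 2^{-d} r) ⊆ B(y, r)` gives `c₁ ≤ C c₂ 2ⁿ 2^{-dnα}`, so `d` is bounded independently of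
`y`, `r`. Hence the integers `j` with `L_f(y, 2^{-j})` in one dyadic interval `[2^{-k-1}, 2^{-k})`
lie in a window of bounded length.
-/

theorem Int.finite_and_ncard_le_of_forall_add_mem {S : Set ℤ} {D : ℕ}
    (h : ∀ i ∈ S, ∀ d : ℕ, i + d ∈ S → d < D) : S.Finite ∧ S.ncard ≤ 2 * D := by
  rcases S.eq_empty_or_nonempty with rfl | ⟨i₀, hi₀⟩
  · simp
  have hsub : S ⊆ Set.Ioo (i₀ - D) (i₀ + D) := by
    intro i hi
    rcases le_total i₀ i with hle | hle
    · have := h i₀ hi₀ (i - i₀).toNat (by rwa [Int.toNat_of_nonneg (by omega), add_sub_cancel])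
      constructor <;> omega
    · have := h i hi (i₀ - i).toNat (by rwa [Int.toNat_of_nonneg (by omega), add_sub_cancel])
      constructor <;> omega
  refine ⟨(Set.finite_Ioo _ _).subset hsub, ?_⟩
  calc S.ncard ≤ (Set.Ioo (i₀ - D) (i₀ + D)).ncard := Set.ncard_le_ncard hsub (Set.finite_Ioo _ _)
    _ ≤ 2 * D := by
      rw [← Finset.coe_Ioo, Set.ncard_coe_finset, Int.card_Ioo]
      omega

theorem MeasureTheory.Measure.addHaar_ball_mul_div_addHaar_ball {E : Type*}
    [NormedAddCommGroup E] [NormedSpace ℝ E] [MeasurableSpace E] [BorelSpace E]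
    [FiniteDimensional ℝ E] (μ : Measure E) [μ.IsAddHaarMeasure] (x : E) {s r : ℝ}
    (hs : 0 < s) (hr : 0 < r) :
    μ (Metric.ball x (s * r)) / μ (Metric.ball x r) = ENNReal.ofReal (s ^ Module.finrank ℝ E) := by
  rw [Measure.addHaar_ball_mul_of_pos μ x hs, Measure.addHaar_ball_center μ x r,
    ENNReal.mul_div_cancel_right (Metric.measure_ball_pos μ 0 hr).ne' measure_ball_lt_top.ne]

theorem distortionL_of_subsingleton {n : ℕ} [Subsingleton (EuclideanSpace ℝ (Fin n))]
    (f : EuclideanSpace ℝ (Fin n) → EuclideanSpace ℝ (Fin n)) (x : EuclideanSpace ℝ (Fin n))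
    {r : ℝ} (hr : 0 ≤ r) : distortionL f x r = 0 := by
  have : {t : ℝ | ∃ y, dist x y ≤ r ∧ t = dist (f x) (f y)} = {0} := by
    ext t
    simp only [Set.mem_ofPred_eq, Set.mem_singleton_iff, Subsingleton.elim _ x, dist_self]
    exact ⟨fun ⟨_, _, ht⟩ => ht, fun ht => ⟨x, hr, ht⟩⟩
  rw [distortionL, this, csSup_singleton]

theorem distortionL_nonneg {n : ℕ} (f : EuclideanSpace ℝ (Fin n) → EuclideanSpace ℝ (Fin n))
    (x : EuclideanSpace ℝ (Fin n)) (r : ℝ) : 0 ≤ distortionL f x r :=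
  Real.sSup_nonneg fun _ ⟨_, _, ht⟩ => ht ▸ dist_nonneg

section Distortion

variable {n : ℕ}

def VolumeRatioBound (f : EuclideanSpace ℝ (Fin n) → EuclideanSpace ℝ (Fin n)) (C α : ℝ) : Prop :=
  ∀ (x : EuclideanSpace ℝ (Fin n)) (r : ℝ) (E : Set (EuclideanSpace ℝ (Fin n))),
    0 < r → MeasurableSet E → E ⊆ Metric.ball x r →
    volume (f '' E) / volume (f '' Metric.ball x r) ≤
      ENNReal.ofReal C * (volume E / volume (Metric.ball x r)) ^ α

def VolumeComparableDistortion (f : EuclideanSpace ℝ (Fin n) → EuclideanSpace ℝ (Fin n))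
    (c₁ c₂ : ℝ≥0∞) : Prop :=
  ∀ (x : EuclideanSpace ℝ (Fin n)) (r : ℝ), 0 < r →
    c₁ * ENNReal.ofReal (distortionL f x r ^ n) ≤ volume (f '' Metric.ball x r) ∧
    volume (f '' Metric.ball x r) ≤ c₂ * ENNReal.ofReal (distortionL f x r ^ n)

variable {f : EuclideanSpace ℝ (Fin n) → EuclideanSpace ℝ (Fin n)} {C α : ℝ} {c₁ c₂ : ℝ≥0∞}

theorem le_mul_rpow_of_distortionL_le_two_mul (hα : 0 ≤ α) (hc₂ : c₂ ≠ ∞)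
    (hdistort : VolumeRatioBound f C α) (hL : VolumeComparableDistortion f c₁ c₂)
    {y : EuclideanSpace ℝ (Fin n)} {s r : ℝ} (hs0 : 0 < s) (hs1 : s ≤ 1) (hr : 0 < r)
    (hpos : 0 < distortionL f y (s * r)) (hle : distortionL f y r ≤ 2 * distortionL f y (s * r)) :
    c₁ ≤ ENNReal.ofReal C * c₂ * 2 ^ n * ENNReal.ofReal (s ^ n) ^ α := by
  set L₀ := distortionL f y (s * r)
  have hratio := Measure.addHaar_ball_mul_div_addHaar_ball volume y hs0 hr
  rw [finrank_euclideanSpace_fin] at hratio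
  have hsub : Metric.ball y (s * r) ⊆ Metric.ball y r :=
    Metric.ball_subset_ball (mul_le_of_le_one_left hr.le hs1)
  have hV := hdistort y r _ hr measurableSet_ball hsub
  rw [hratio] at hV
  obtain ⟨-, hup⟩ := hL y r hr
  have hV_ne_top : volume (f '' Metric.ball y r) ≠ ∞ :=
    ne_top_of_le_ne_top (mul_ne_top hc₂ ofReal_ne_top) hup
  rw [ENNReal.div_le_iff_le_mul
    (Or.inr (mul_ne_top ofReal_ne_top (rpow_ne_top_of_nonneg hα ofReal_ne_top)))
    (Or.inl hV_ne_top)] at hV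
  have hL₀_ne_zero : ENNReal.ofReal (L₀ ^ n) ≠ 0 := (ofReal_pos.mpr (pow_pos hpos n)).ne'
  rw [← ENNReal.mul_le_mul_iff_left hL₀_ne_zero ofReal_ne_top]
  calc c₁ * ENNReal.ofReal (L₀ ^ n)
      ≤ volume (f '' Metric.ball y (s * r)) := (hL y (s * r) (mul_pos hs0 hr)).1
    _ ≤ ENNReal.ofReal C * ENNReal.ofReal (s ^ n) ^ α * volume (f '' Metric.ball y r) := hV
    _ ≤ ENNReal.ofReal C * ENNReal.ofReal (s ^ n) ^ α *
          (c₂ * ENNReal.ofReal ((2 * L₀) ^ n)) := by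
      gcongr
      exact hup.trans (by gcongr; exact distortionL_nonneg _ _ _)
    _ = ENNReal.ofReal C * c₂ * 2 ^ n * ENNReal.ofReal (s ^ n) ^ α *
          ENNReal.ofReal (L₀ ^ n) := by
      rw [mul_pow, ENNReal.ofReal_mul (by positivity), ENNReal.ofReal_pow zero_le_two,
        ENNReal.ofReal_ofNat]
      ring

theorem exists_forall_lt_of_distortionL_le_two_mul (hα : 0 < α) (hc₁ : c₁ ≠ 0)
    (hc₂ : c₂ ≠ ∞) (hdistort : VolumeRatioBound f C α)
    (hL : VolumeComparableDistortion f c₁ c₂) :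
    ∃ D : ℕ, ∀ (y : EuclideanSpace ℝ (Fin n)) (r : ℝ) (d : ℕ), 0 < r →
      0 < distortionL f y (2⁻¹ ^ d * r) →
      distortionL f y r ≤ 2 * distortionL f y (2⁻¹ ^ d * r) → d < D := by
  rcases Nat.eq_zero_or_pos n with rfl | hn
  · refine ⟨0, fun y r d hr hpos _ => ?_⟩
    rw [distortionL_of_subsingleton f y (by positivity)] at hpos
    exact (lt_irrefl 0 hpos).elim
  set K := ENNReal.ofReal C * c₂ * 2 ^ n
  set q : ℝ≥0∞ := 2⁻¹ ^ α
  have hq : q < 1 := ENNReal.rpow_lt_one (ENNReal.inv_lt_one.mpr one_lt_two) hα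
  have hK : K ≠ ∞ := mul_ne_top (mul_ne_top ofReal_ne_top hc₂) (pow_ne_top ofNat_ne_top)
  have hε : 0 < c₁ / K := ENNReal.div_pos_iff.mpr ⟨hc₁, hK⟩
  obtain ⟨D, hD⟩ := Filter.eventually_atTop.mp
    ((ENNReal.tendsto_pow_atTop_nhds_zero_of_lt_one hq).eventually (gt_mem_nhds hε))
  refine ⟨D, fun y r d hr hpos hle => ?_⟩
  by_contra! hDd
  have hscale : ENNReal.ofReal (((2⁻¹ : ℝ) ^ d) ^ n) ^ α ≤ q ^ d := by
    calc ENNReal.ofReal (((2⁻¹ : ℝ) ^ d) ^ n) ^ α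
        ≤ ENNReal.ofReal ((2⁻¹ : ℝ) ^ d) ^ α := by
          gcongr
          exact pow_le_of_le_one (by positivity) (pow_le_one₀ (by norm_num) (by norm_num)) hn.ne'
      _ = q ^ d := by
          rw [ENNReal.ofReal_pow (by norm_num), ENNReal.ofReal_inv_of_pos two_pos,
            ENNReal.ofReal_ofNat, ← ENNReal.rpow_natCast, ← ENNReal.rpow_mul, mul_comm,
            ENNReal.rpow_mul, ENNReal.rpow_natCast]
  have hc₁K := le_mul_rpow_of_distortionL_le_two_mul hα.le hc₂ hdistort hL (by positivity)
    (pow_le_one₀ (by norm_num) (by norm_num)) hr hpos hle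
  exact (hD d hDd).not_ge (ENNReal.div_le_of_le_mul (hc₁K.trans (by rw [mul_comm]; gcongr)))

end Distortion

theorem bounded_multiplicity_of_distortion_scales_general (n : ℕ)
    (f : EuclideanSpace ℝ (Fin n) ≃ₜ EuclideanSpace ℝ (Fin n))
    (α C : ℝ) (hα0 : 0 < α)
    (c₁ c₂ : ℝ≥0∞) (hc₁ : 0 < c₁) (hc₂ : c₂ ≠ ∞)
    (hdistort : ∀ (x : EuclideanSpace ℝ (Fin n)) (r : ℝ) (E : Set (EuclideanSpace ℝ (Fin n))),
      0 < r → MeasurableSet E → E ⊆ Metric.ball x r →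
      volume (⇑f '' E) / volume (⇑f '' Metric.ball x r) ≤
        ENNReal.ofReal C * (volume E / volume (Metric.ball x r)) ^ α)
    (hL : ∀ (x : EuclideanSpace ℝ (Fin n)) (r : ℝ), 0 < r →
      c₁ * ENNReal.ofReal (distortionL (⇑f) x r ^ n) ≤ volume (⇑f '' Metric.ball x r) ∧
      volume (⇑f '' Metric.ball x r) ≤ c₂ * ENNReal.ofReal (distortionL (⇑f) x r ^ n)) :
    ∃ N : ℕ, ∀ (y : EuclideanSpace ℝ (Fin n)) (k : ℤ),
      {j : ℤ | (2 : ℝ) ^ (-k - 1) ≤ distortionL (⇑f) y ((2 : ℝ) ^ (-j)) ∧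
        distortionL (⇑f) y ((2 : ℝ) ^ (-j)) < (2 : ℝ) ^ (-k)}.Finite ∧
      {j : ℤ | (2 : ℝ) ^ (-k - 1) ≤ distortionL (⇑f) y ((2 : ℝ) ^ (-j)) ∧
        distortionL (⇑f) y ((2 : ℝ) ^ (-j)) < (2 : ℝ) ^ (-k)}.ncard ≤ N := by
  obtain ⟨D, hD⟩ := exists_forall_lt_of_distortionL_le_two_mul hα0 hc₁.ne' hc₂ hdistort hL
  refine ⟨2 * D, fun y k => Int.finite_and_ncard_le_of_forall_add_mem ?_⟩
  rintro j ⟨-, hj_lt⟩ d ⟨hjd_ge, -⟩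
  have hradius : (2 : ℝ) ^ (-(j + d)) = 2⁻¹ ^ d * 2 ^ (-j) := by
    rw [neg_add, zpow_add₀ two_ne_zero, mul_comm, zpow_neg 2 (d : ℤ), zpow_natCast, inv_pow]
  rw [hradius] at hjd_ge
  have hbin : (2 : ℝ) ^ (-k) = 2 * 2 ^ (-k - 1) := by
    rw [zpow_sub₀ two_ne_zero, zpow_one]; ring
  exact hD y _ d (by positivity) ((by positivity : (0 : ℝ) < 2 ^ (-k - 1)).trans_le hjd_ge)
    (hj_lt.le.trans (hbin.trans_le (by gcongr)))

/-- Bounded multiplicity of distortion scales (inequality (5.5)): if a quasiconformal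
homeomorphism `f` of `ℝⁿ` satisfies `|f(E)|/|f(B)| ≤ C (|E|/|B|)^α` and
`L_f(x,r)ⁿ ≍ |f(B(x,r))|`, then there is `N` such that for all `y` and `k`, the set
`{j : L_f(y,2^{-j}) ∈ [2^{-k-1}, 2^{-k})}` has at most `N` elements. -/
theorem bounded_multiplicity_of_distortion_scales (n : ℕ)
    (f : EuclideanSpace ℝ (Fin n) ≃ₜ EuclideanSpace ℝ (Fin n))
    (α C : ℝ) (hα0 : 0 < α) (hα1 : α ≤ 1) (hC : 0 < C)
    (c₁ c₂ : ℝ≥0∞) (hc₁ : 0 < c₁) (hc₂ : c₂ ≠ ∞)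
    (hdistort : ∀ (x : EuclideanSpace ℝ (Fin n)) (r : ℝ) (E : Set (EuclideanSpace ℝ (Fin n))),
      0 < r → MeasurableSet E → E ⊆ Metric.ball x r →
      volume (⇑f '' E) / volume (⇑f '' Metric.ball x r) ≤
        ENNReal.ofReal C * (volume E / volume (Metric.ball x r)) ^ α)
    (hL : ∀ (x : EuclideanSpace ℝ (Fin n)) (r : ℝ), 0 < r →
      c₁ * ENNReal.ofReal (distortionL (⇑f) x r ^ n) ≤ volume (⇑f '' Metric.ball x r) ∧
      volume (⇑f '' Metric.ball x r) ≤ c₂ * ENNReal.ofReal (distortionL (⇑f) x r ^ n)) :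
    ∃ N : ℕ, ∀ (y : EuclideanSpace ℝ (Fin n)) (k : ℤ),
      {j : ℤ | (2 : ℝ) ^ (-k - 1) ≤ distortionL (⇑f) y ((2 : ℝ) ^ (-j)) ∧
        distortionL (⇑f) y ((2 : ℝ) ^ (-j)) < (2 : ℝ) ^ (-k)}.Finite ∧
      {j : ℤ | (2 : ℝ) ^ (-k - 1) ≤ distortionL (⇑f) y ((2 : ℝ) ^ (-j)) ∧
        distortionL (⇑f) y ((2 : ℝ) ^ (-j)) < (2 : ℝ) ^ (-k)}.ncard ≤ N :=
  bounded_multiplicity_of_distortion_scales_general n f α C hα0 c₁ c₂ hc₁ hc₂ hdistort hL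
end
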